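/- arXiv:2510.27498 — 4 statements merged into one kernel-verified Lean document; each statement's English description precedes it below -/
import Mathlib

section
/- Bounded-difference property of the permuted sliced Wasserstein statistic under cross-block transpositions (key step in the proof of Lemma 11): Let p ≥ 1, D > 0, integers n, m ≥ 1, N = n+m. Fix points x_1,…,x_N ∈ ℝ^d with ‖x_i‖ ≤ D for all i, and fix directions θ_1,…,θ_L ∈ S^{d−1}. Then for every permutation π of {1,…,N}, every i ∈ {1,…,n}, and every j ∈ {n+1,…,N}, letting π^{i,j} be the permutation obtained from π by transposing its i-th and j-th entries, | ŜW^{p,π}_p − ŜW^{p,π^{i,j}}_p | ≤ (2D)^p/n + (2D)^p/m. -/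
open MeasureTheory Finset
open scoped ENNReal

noncomputable section

/-- The set of couplings of two probability measures `P` and `Q`. -/
def couplings {X : Type*} [MeasurableSpace X] (P Q : Measure X) : Set (Measure (X × X)) :=
  {γ | IsProbabilityMeasure γ ∧ γ.map Prod.fst = P ∧ γ.map Prod.snd = Q}

/-- The `p`-th power of the `p`-Wasserstein distance between `P` and `Q`. -/
def WpPow {X : Type*} [MeasurableSpace X] [PseudoMetricSpace X] (p : ℝ) (P Q : Measure X) : ℝ :=
  sInf ((fun γ : Measure (X × X) => ∫ xy, dist xy.1 xy.2 ^ p ∂γ) '' couplings P Q)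

/-- Euclidean space `ℝ^d`. -/
abbrev Euc (d : ℕ) := EuclideanSpace ℝ (Fin d)

/-- Pushforward of a measure on `ℝ^d` under the projection `x ↦ ⟨θ, x⟩`. -/
def projMeasure {d : ℕ} (θ : Euc d) (μ : Measure (Euc d)) : Measure ℝ :=
  μ.map (fun y => (inner ℝ θ y : ℝ))

/-- Empirical measure of a finite family of points. -/
def empMeas {ι X : Type*} [Fintype ι] [MeasurableSpace X] (v : ι → X) : Measure X :=
  (Fintype.card ι : ℝ≥0∞)⁻¹ • ∑ i, Measure.dirac (v i)

/-- Monte-Carlo sliced Wasserstein statistic between the empirical measures of two samples,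
using projection directions `θ 1, …, θ L`. -/
def swStat (p : ℝ) {d n m L : ℕ} (Y : Fin n → Euc d) (Z : Fin m → Euc d)
    (θ : Fin L → Euc d) : ℝ :=
  (L : ℝ)⁻¹ * ∑ ℓ : Fin L,
    WpPow p (projMeasure (θ ℓ) (empMeas Y)) (projMeasure (θ ℓ) (empMeas Z))

/-- Permuted sliced Wasserstein statistic. -/
def swPermStat (p : ℝ) {d : ℕ} (n m : ℕ) {L : ℕ} (x : Fin (n + m) → Euc d)
    (π : Equiv.Perm (Fin (n + m))) (θ : Fin L → Euc d) : ℝ :=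
  swStat p (fun i : Fin n => x (π (Fin.castAdd m i)))
    (fun j : Fin m => x (π (Fin.natAdd n j))) θ

/-- Pooled sample. -/
def pooled {d : ℕ} {n m : ℕ} (Y : Fin n → Euc d) (Z : Fin m → Euc d) : Fin (n + m) → Euc d :=
  Fin.append Y Z

/-- The permuted statistics for the `B` sampled permutations together with the identity
permutation in last position. -/
def permStatsVec (p : ℝ) {d : ℕ} (n m : ℕ) {L B : ℕ} (Y : Fin n → Euc d) (Z : Fin m → Euc d)
    (θ : Fin L → Euc d) (πs : Fin B → Equiv.Perm (Fin (n + m))) : Fin (B + 1) → ℝ :=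
  fun b => swPermStat p n m (pooled Y Z) (if h : (b : ℕ) < B then πs ⟨b, h⟩ else 1) θ

/-- Empirical `(1−α)`-quantile of a finite family of statistics. -/
def empQuantile (α : ℝ) {K : ℕ} (s : Fin K → ℝ) : ℝ :=
  sInf {t : ℝ | 1 - α ≤ (Nat.card {b : Fin K // s b ≤ t} : ℝ) / K}

/-- Population `(1−α)`-quantile of the permutation distribution of a statistic. -/
def popQuantile (α : ℝ) {N : ℕ} (f : Equiv.Perm (Fin N) → ℝ) : ℝ :=
  sInf {t : ℝ | 1 - α ≤
    (Nat.card {π : Equiv.Perm (Fin N) // f π ≤ t} : ℝ) / (Fintype.card (Equiv.Perm (Fin N)))}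

/-- Uniform probability measure on a finite type. -/
def unifFin (X : Type*) [MeasurableSpace X] [Fintype X] : Measure X :=
  (Fintype.card X : ℝ≥0∞)⁻¹ • ∑ x : X, Measure.dirac x

instance unifFin.isProbabilityMeasure (X : Type*) [MeasurableSpace X] [Fintype X] [Nonempty X] :
    IsProbabilityMeasure (unifFin X) := by
  constructor
  simp only [unifFin, Measure.smul_apply, Measure.coe_finset_sum, Finset.sum_apply,
    smul_eq_mul]
  rw [Finset.sum_congr rfl (fun x _ => (by simp : Measure.dirac x Set.univ = 1))]
  simp only [Finset.sum_const, Finset.card_univ, nsmul_eq_mul, mul_one]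
  exact ENNReal.inv_mul_cancel (by exact_mod_cast Fintype.card_ne_zero)
    (ENNReal.natCast_ne_top _)

instance (N : ℕ) : MeasurableSpace (Equiv.Perm (Fin N)) := ⊤
instance (N : ℕ) : Nonempty (Equiv.Perm (Fin N)) := ⟨1⟩

/-- Population sliced Wasserstein distance (`p`-th power) with direction distribution `σ`. -/
def SWpPow (p : ℝ) {d : ℕ} (σ : Measure (Euc d)) (μ ν : Measure (Euc d)) : ℝ :=
  ∫ θ, WpPow p (projMeasure θ μ) (projMeasure θ ν) ∂σ

section Lemmas

variable {p C : ℝ}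

lemma cost_continuous (hp : 0 ≤ p) : Continuous (fun z : ℝ × ℝ => dist z.1 z.2 ^ p) :=
  (continuous_fst.dist continuous_snd).rpow_const (fun _ => Or.inr hp)

lemma empMeas_apply {ι : Type*} [Fintype ι] {X : Type*} [MeasurableSpace X] (v : ι → X)
    {A : Set X} (hA : MeasurableSet A) :
    empMeas v A = (Fintype.card ι : ℝ≥0∞)⁻¹ * ∑ i, A.indicator 1 (v i) := by
  simp [empMeas, Measure.dirac_apply' _ hA]

lemma empMeas_map {ι : Type*} [Fintype ι] {X Y : Type*} [MeasurableSpace X] [MeasurableSpace Y]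
    {f : X → Y} (hf : Measurable f) (v : ι → X) :
    (empMeas v).map f = empMeas (fun i => f (v i)) := by
  ext A hA
  rw [Measure.map_apply hf hA, empMeas_apply _ (hf hA), empMeas_apply _ hA]
  congr 1

instance empMeas_prob {ι X : Type*} [Fintype ι] [Nonempty ι] [MeasurableSpace X] (v : ι → X) :
    IsProbabilityMeasure (empMeas v) := by
  constructor
  rw [empMeas_apply _ MeasurableSet.univ]
  simp only [Set.indicator_univ, Pi.one_apply, Finset.sum_const, Finset.card_univ, nsmul_eq_mul,
    mul_one]
  exact ENNReal.inv_mul_cancel (by exact_mod_cast Fintype.card_ne_zero) (ENNReal.natCast_ne_top _)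

lemma empMeas_compl_zero {ι : Type*} [Fintype ι] (v : ι → ℝ) {A : Set ℝ}
    (hA : MeasurableSet A) (hv : ∀ i, v i ∈ A) : empMeas v Aᶜ = 0 := by
  rw [empMeas_apply _ hA.compl]
  have : ∀ i : ι, Aᶜ.indicator (1 : ℝ → ℝ≥0∞) (v i) = 0 := fun i =>
    Set.indicator_of_notMem (by simp [hv i]) _
  simp [this]

end Lemmas

section WpLemmas

variable {p C : ℝ}

lemma cost_nonneg (z : ℝ × ℝ) : 0 ≤ dist z.1 z.2 ^ p := Real.rpow_nonneg dist_nonneg p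

lemma couplings_nonempty (P Q : Measure ℝ) [IsProbabilityMeasure P] [IsProbabilityMeasure Q] :
    (couplings P Q).Nonempty := by
  refine ⟨P.prod Q, ⟨inferInstance, ?_, ?_⟩⟩ <;>
    simp [Measure.map_fst_prod, Measure.map_snd_prod, measure_univ]

lemma wp_image_nonneg {P Q : Measure ℝ} {y : ℝ}
    (hy : y ∈ (fun γ : Measure (ℝ × ℝ) => ∫ xy, dist xy.1 xy.2 ^ p ∂γ) '' couplings P Q) :
    0 ≤ y := by
  obtain ⟨γ, -, rfl⟩ := hy
  exact integral_nonneg cost_nonneg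

lemma wp_image_bddBelow (P Q : Measure ℝ) :
    BddBelow ((fun γ : Measure (ℝ × ℝ) => ∫ xy, dist xy.1 xy.2 ^ p ∂γ) '' couplings P Q) :=
  ⟨0, fun _ hy => wp_image_nonneg hy⟩

lemma WpPow_nonneg (P Q : Measure ℝ) [IsProbabilityMeasure P] [IsProbabilityMeasure Q] :
    0 ≤ WpPow p P Q :=
  le_csInf ((couplings_nonempty P Q).image _) fun _ hy => wp_image_nonneg hy

lemma couplings_swap_mem {P Q : Measure ℝ} {γ : Measure (ℝ × ℝ)} (h : γ ∈ couplings P Q) :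
    γ.map Prod.swap ∈ couplings Q P := by
  obtain ⟨hprob, hfst, hsnd⟩ := h
  refine ⟨(haveI := hprob; Measure.isProbabilityMeasure_map measurable_swap.aemeasurable), ?_, ?_⟩
  · rw [Measure.map_map measurable_fst measurable_swap]
    exact hsnd
  · rw [Measure.map_map measurable_snd measurable_swap]
    exact hfst

lemma integral_cost_swap (hp : 0 ≤ p) (γ : Measure (ℝ × ℝ)) :
    ∫ xy, dist xy.1 xy.2 ^ p ∂(γ.map Prod.swap) = ∫ xy, dist xy.1 xy.2 ^ p ∂γ := by
  rw [integral_map measurable_swap.aemeasurable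
    ((cost_continuous hp).stronglyMeasurable.aestronglyMeasurable)]
  simp [dist_comm]

lemma WpPow_symm (hp : 0 ≤ p) (P Q : Measure ℝ) : WpPow p P Q = WpPow p Q P := by
  have key : ∀ (P Q : Measure ℝ),
      (fun γ : Measure (ℝ × ℝ) => ∫ xy, dist xy.1 xy.2 ^ p ∂γ) '' couplings P Q ⊆
      (fun γ : Measure (ℝ × ℝ) => ∫ xy, dist xy.1 xy.2 ^ p ∂γ) '' couplings Q P := by
    rintro P Q _ ⟨γ, hγ, rfl⟩
    exact ⟨γ.map Prod.swap, couplings_swap_mem hγ, integral_cost_swap hp γ⟩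
  unfold WpPow
  rw [Set.Subset.antisymm (key P Q) (key Q P)]

end WpLemmas

section Main

variable {p C : ℝ}

lemma wpPow_one_point {n : ℕ} (hp : 1 ≤ p) (hC : 0 < C)
    (u u' : Fin n → ℝ) (i0 : Fin n) (huu' : ∀ k, k ≠ i0 → u k = u' k)
    (hu : ∀ k, |u k| ≤ C) (hu' : ∀ k, |u' k| ≤ C)
    (ν : Measure ℝ) [IsProbabilityMeasure ν] (hν : ν (Set.Icc (-C) C)ᶜ = 0) :
    WpPow p (empMeas u) ν ≤ WpPow p (empMeas u') ν + (2 * C) ^ p / n := by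
  haveI : Nonempty (Fin n) := ⟨i0⟩
  have hn : (n : ℝ≥0∞) ≠ 0 := by exact_mod_cast Fin.pos_iff_nonempty.mpr ‹_› |>.ne'
  have hp0 : (0 : ℝ) ≤ p := le_trans zero_le_one hp
  set K : Set ℝ := Set.Icc (-C) C with hKdef
  have hK : MeasurableSet K := measurableSet_Icc
  set M : ℝ := (2 * C) ^ p with hMdef
  have hM0 : 0 ≤ M := Real.rpow_nonneg (by linarith) p
  have hKbound : ∀ z : ℝ × ℝ, z.1 ∈ K → z.2 ∈ K → dist z.1 z.2 ^ p ≤ M := by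
    intro z h1 h2
    have b1 : |z.1| ≤ C := abs_le.mpr ⟨h1.1, h1.2⟩
    have b2 : |z.2| ≤ C := abs_le.mpr ⟨h2.1, h2.2⟩
    have : dist z.1 z.2 ≤ 2 * C := by
      rw [Real.dist_eq]
      calc |z.1 - z.2| ≤ |z.1| + |z.2| := abs_sub _ _
        _ ≤ 2 * C := by linarith
    exact Real.rpow_le_rpow dist_nonneg this hp0
  have huK : ∀ k, u k ∈ K := fun k => by
    have := abs_le.mp (hu k); exact Set.mem_Icc.mpr ⟨this.1, this.2⟩
  have hu'K : ∀ k, u' k ∈ K := fun k => by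
    have := abs_le.mp (hu' k); exact Set.mem_Icc.mpr ⟨this.1, this.2⟩
  have key : ∀ y ∈ ((fun γ : Measure (ℝ × ℝ) => ∫ xy, dist xy.1 xy.2 ^ p ∂γ) ''
      couplings (empMeas u') ν), WpPow p (empMeas u) ν - M / n ≤ y := by
    rintro y ⟨γ', ⟨hγp, hfst, hsnd⟩, rfl⟩
    simp only
    -- bad set has measure zero under γ'
    have hfst_compl : γ' (Prod.fst ⁻¹' Kᶜ) = 0 := by
      rw [← Measure.map_apply measurable_fst hK.compl, hfst]
      exact empMeas_compl_zero u' hK hu'K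
    have hsnd_compl : γ' (Prod.snd ⁻¹' Kᶜ) = 0 := by
      rw [← Measure.map_apply measurable_snd hK.compl, hsnd]
      exact hν
    have hγ'K : γ' ((K ×ˢ K)ᶜ) = 0 := by
      refine measure_mono_null (fun z hz => ?_) (measure_union_null hfst_compl hsnd_compl)
      by_cases h1 : z.1 ∈ K
      · exact Or.inr (fun h2 => hz ⟨h1, h2⟩)
      · exact Or.inl h1
    have hae : ∀ᵐ z ∂γ', dist z.1 z.2 ^ p ≤ M := by
      refine measure_mono_null (fun z hz => ?_) hγ'K
      intro hzK
      exact hz (hKbound z hzK.1 hzK.2)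
    have hcost_sm : StronglyMeasurable (fun z : ℝ × ℝ => dist z.1 z.2 ^ p) :=
      (cost_continuous hp0).stronglyMeasurable
    have hint : Integrable (fun z : ℝ × ℝ => dist z.1 z.2 ^ p) γ' := by
      refine Integrable.mono' (integrable_const M) hcost_sm.aestronglyMeasurable ?_
      filter_upwards [hae] with z hz
      rwa [Real.norm_eq_abs, abs_of_nonneg (cost_nonneg z)]
    -- the surgery
    set a : ℝ := u i0 with hadef
    set a' : ℝ := u' i0 with ha'def
    set S : Set (ℝ × ℝ) := Prod.fst ⁻¹' {a'} with hSdef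
    have hS : MeasurableSet S := measurable_fst (measurableSet_singleton a')
    set c : ℝ≥0∞ := γ' S with hcdef
    have hc_emp : empMeas u' {a'} = c := by
      rw [hcdef, hSdef, ← Measure.map_apply measurable_fst (measurableSet_singleton a'), hfst]
    have hc_lb : (n : ℝ≥0∞)⁻¹ ≤ c := by
      rw [← hc_emp, empMeas_apply _ (measurableSet_singleton a')]
      have h1 : ({a'} : Set ℝ).indicator (1 : ℝ → ℝ≥0∞) (u' i0) = 1 := by exact Set.indicator_of_mem (Set.mem_singleton_iff.mpr rfl) _
      have h2 : (1 : ℝ≥0∞) ≤ ∑ i : Fin n, ({a'} : Set ℝ).indicator 1 (u' i) := by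
        rw [← h1]
        exact Finset.single_le_sum (f := fun k : Fin n => ({a'} : Set ℝ).indicator (1 : ℝ → ℝ≥0∞) (u' k)) (fun k _ => zero_le) (Finset.mem_univ i0)
      calc (n : ℝ≥0∞)⁻¹ = (n : ℝ≥0∞)⁻¹ * 1 := (mul_one _).symm
        _ ≤ _ := by rw [Fintype.card_fin]; exact mul_le_mul_right h2 _
    have hc_ne0 : c ≠ 0 := by
      intro h
      rw [h, le_zero_iff] at hc_lb
      exact (ENNReal.inv_ne_zero.mpr (ENNReal.natCast_ne_top n)) hc_lb
    have hc_top : c ≠ ⊤ := by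
      refine ne_top_of_le_ne_top (by simp : γ' Set.univ ≠ ⊤) (measure_mono (Set.subset_univ S))
    set r : ℝ≥0∞ := ((n : ℝ≥0∞) * c)⁻¹ with hrdef
    have hrc : r * c = (n : ℝ≥0∞)⁻¹ := by
      rw [hrdef, ENNReal.mul_inv (Or.inl hn) (Or.inl (ENNReal.natCast_ne_top n)), mul_assoc,
        ENNReal.inv_mul_cancel hc_ne0 hc_top, mul_one]
    have hr_le1 : r ≤ 1 := by
      rw [hrdef, ENNReal.inv_le_one]
      calc (1 : ℝ≥0∞) = (n : ℝ≥0∞) * (n : ℝ≥0∞)⁻¹ :=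
        (ENNReal.mul_inv_cancel hn (ENNReal.natCast_ne_top n)).symm
        _ ≤ (n : ℝ≥0∞) * c := mul_le_mul_right hc_lb _
    have hr_top : r ≠ ⊤ := ne_top_of_le_ne_top ENNReal.one_ne_top hr_le1
    set s : Measure (ℝ × ℝ) := γ'.restrict S with hsdef
    set g : ℝ × ℝ → ℝ × ℝ := fun z => (a, z.2) with hgdef
    have hg : Measurable g := measurable_const.prodMk measurable_snd
    set γ : Measure (ℝ × ℝ) := γ'.restrict Sᶜ + (1 - r) • s + (r • s).map g with hγdef
    -- integrability over the pieces
    have hrest_int : Integrable (fun z : ℝ × ℝ => dist z.1 z.2 ^ p) (γ'.restrict Sᶜ) :=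
      hint.restrict
    have hs_int : Integrable (fun z : ℝ × ℝ => dist z.1 z.2 ^ p) s := hint.restrict
    have hone_sub_r_top : (1 : ℝ≥0∞) - r ≠ ⊤ :=
      ne_top_of_le_ne_top ENNReal.one_ne_top tsub_le_self
    have h2_int : Integrable (fun z : ℝ × ℝ => dist z.1 z.2 ^ p) ((1 - r) • s) :=
      hs_int.smul_measure hone_sub_r_top
    have hmap_univ : ((r • s).map g) Set.univ = (n : ℝ≥0∞)⁻¹ := by
      rw [Measure.map_apply hg MeasurableSet.univ, Set.preimage_univ, Measure.smul_apply,
        Measure.restrict_apply_univ, smul_eq_mul, ← hcdef, hrc]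
    have hbadmeas : MeasurableSet {z : ℝ × ℝ | ¬ dist z.1 z.2 ^ p ≤ M} := by
      simpa [not_le] using measurableSet_lt measurable_const hcost_sm.measurable
    have hsK : (r • s) (Prod.snd ⁻¹' Kᶜ) = 0 := by
      have h1 : s (Prod.snd ⁻¹' Kᶜ) = 0 := by
        rw [hsdef, Measure.restrict_apply (measurable_snd hK.compl)]
        exact measure_mono_null Set.inter_subset_left hsnd_compl
      rw [Measure.smul_apply, h1, smul_eq_mul, mul_zero]
    have hmap_ae : ∀ᵐ z ∂((r • s).map g), dist z.1 z.2 ^ p ≤ M := by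
      rw [ae_iff, Measure.map_apply hg hbadmeas]
      refine measure_mono_null (fun z hz => ?_) hsK
      intro h2
      exact hz (hKbound (g z) (huK i0) h2)
    haveI : IsFiniteMeasure ((r • s).map g) := by
      constructor
      rw [hmap_univ]
      exact lt_of_le_of_lt (ENNReal.inv_le_one.mpr (by
        exact_mod_cast Nat.one_le_iff_ne_zero.mpr (by exact_mod_cast fun h => hn (by exact_mod_cast h)))) ENNReal.one_lt_top
    have h3_int : Integrable (fun z : ℝ × ℝ => dist z.1 z.2 ^ p) ((r • s).map g) := by
      refine Integrable.mono' (integrable_const M) hcost_sm.aestronglyMeasurable ?_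
      filter_upwards [hmap_ae] with z hz
      rwa [Real.norm_eq_abs, abs_of_nonneg (cost_nonneg z)]
    have hcost_map : ∫ z, dist z.1 z.2 ^ p ∂((r • s).map g) ≤ M / n := by
      calc ∫ z, dist z.1 z.2 ^ p ∂((r • s).map g) ≤ ∫ _, M ∂((r • s).map g) :=
            integral_mono_ae h3_int (integrable_const M) hmap_ae
        _ = (((r • s).map g) Set.univ).toReal * M := by rw [integral_const, smul_eq_mul]; rfl
        _ = (n : ℝ)⁻¹ * M := by rw [hmap_univ]; simp
        _ = M / n := by ring
    have hsplit : ∫ z, dist z.1 z.2 ^ p ∂γ =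
        ∫ z, dist z.1 z.2 ^ p ∂(γ'.restrict Sᶜ) + ∫ z, dist z.1 z.2 ^ p ∂((1 - r) • s)
          + ∫ z, dist z.1 z.2 ^ p ∂((r • s).map g) := by
      rw [hγdef, integral_add_measure (hrest_int.add_measure h2_int) h3_int,
        integral_add_measure hrest_int h2_int]
    have hγ'split : ∫ z, dist z.1 z.2 ^ p ∂γ' =
        ∫ z, dist z.1 z.2 ^ p ∂(γ'.restrict Sᶜ) + ∫ z, dist z.1 z.2 ^ p ∂s := by
      conv_lhs => rw [← Measure.restrict_compl_add_restrict (μ := γ') hS]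
      rw [integral_add_measure hrest_int hs_int]
    have hsmall : ∫ z, dist z.1 z.2 ^ p ∂((1 - r) • s) ≤ ∫ z, dist z.1 z.2 ^ p ∂s := by
      rw [integral_smul_measure]
      have h1 : ((1 : ℝ≥0∞) - r).toReal ≤ 1 := by
        have := ENNReal.toReal_mono ENNReal.one_ne_top (tsub_le_self (a := (1:ℝ≥0∞)) (b := r))
        simpa using this
      have h2 : (0:ℝ) ≤ ∫ z, dist z.1 z.2 ^ p ∂s := integral_nonneg cost_nonneg
      calc ((1 : ℝ≥0∞) - r).toReal • ∫ z, dist z.1 z.2 ^ p ∂s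
          ≤ 1 * ∫ z, dist z.1 z.2 ^ p ∂s := by
            rw [smul_eq_mul]; exact mul_le_mul_of_nonneg_right h1 h2
        _ = _ := one_mul _
    have hcost_le : ∫ z, dist z.1 z.2 ^ p ∂γ ≤ ∫ z, dist z.1 z.2 ^ p ∂γ' + M / n := by
      rw [hsplit, hγ'split]
      linarith [hcost_map, hsmall]
    -- second marginal
    have hsndγ : γ.map Prod.snd = ν := by
      have hgs : Prod.snd ∘ g = (Prod.snd : ℝ × ℝ → ℝ) := rfl
      rw [hγdef, Measure.map_add _ _ measurable_snd, Measure.map_add _ _ measurable_snd,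
        Measure.map_map measurable_snd hg, hgs, Measure.map_smul, Measure.map_smul,
        add_assoc, ← add_smul, tsub_add_cancel_of_le hr_le1, one_smul,
        ← Measure.map_add _ _ measurable_snd, Measure.restrict_compl_add_restrict hS, hsnd]
    -- first marginal
    have m1 : (γ'.restrict Sᶜ).map Prod.fst = (empMeas u').restrict ({a'}ᶜ) := by
      rw [← hfst, Measure.restrict_map measurable_fst (measurableSet_singleton a').compl,
        Set.preimage_compl]
    have m2 : s.map Prod.fst = c • Measure.dirac a' := by
      have h := Measure.restrict_map (μ := γ') measurable_fst (measurableSet_singleton a')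
      rw [hfst, Measure.restrict_singleton, hc_emp] at h
      exact h.symm
    have m3 : ((r • s).map g).map Prod.fst = (n : ℝ≥0∞)⁻¹ • Measure.dirac a := by
      have hgf : Prod.fst ∘ g = fun _ : ℝ × ℝ => a := rfl
      rw [Measure.map_map measurable_fst hg, hgf, Measure.map_const, Measure.smul_apply,
        Measure.restrict_apply_univ, smul_eq_mul, ← hcdef, hrc]
    have hfstγ : γ.map Prod.fst = empMeas u := by
      rw [hγdef, Measure.map_add _ _ measurable_fst, Measure.map_add _ _ measurable_fst,
        m1, m3, Measure.map_smul, m2]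
      ext A hA
      simp only [Measure.add_apply, Measure.smul_apply, smul_eq_mul,
        Measure.restrict_apply hA]
      set dA' : ℝ≥0∞ := Measure.dirac a' A with hdA'
      set dA : ℝ≥0∞ := Measure.dirac a A with hdA
      have hfin : (n : ℝ≥0∞)⁻¹ * dA' ≠ ⊤ :=
        ENNReal.mul_ne_top (ENNReal.inv_ne_top.mpr hn) (measure_ne_top _ _)
      refine (ENNReal.add_left_inj hfin).mp ?_
      have hsub : ((1 : ℝ≥0∞) - r) * c = c - (n : ℝ≥0∞)⁻¹ := by
        rw [ENNReal.sub_mul (fun _ _ => hc_top), one_mul, hrc]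
      have hcomb : ((1 : ℝ≥0∞) - r) * (c * dA') + (n : ℝ≥0∞)⁻¹ * dA' = c * dA' := by
        rw [← mul_assoc, hsub, ← add_mul, tsub_add_cancel_of_le hc_lb]
      have e1 : empMeas u' (A ∩ {a'}ᶜ) + c * dA' = empMeas u' A := by
        have h5 : empMeas u' (A ∩ {a'}) = c * dA' := by
          have h6 := congrArg (fun μ : Measure ℝ => μ A)
            (Measure.restrict_singleton (μ := empMeas u') (a := a'))
          simp only [Measure.restrict_apply hA, Measure.smul_apply, smul_eq_mul, hc_emp] at h6
          rw [hdA']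
          exact h6
        have h7 := measure_inter_add_diff (μ := empMeas u') A (measurableSet_singleton a')
        rw [Set.diff_eq] at h7
        rw [← h7, h5]
        ring
      have e2 : empMeas u A + (n : ℝ≥0∞)⁻¹ * dA' = empMeas u' A + (n : ℝ≥0∞)⁻¹ * dA := by
        rw [empMeas_apply _ hA, empMeas_apply _ hA, hdA', hdA,
          Measure.dirac_apply' _ hA, Measure.dirac_apply' _ hA, Fintype.card_fin,
          ← mul_add, ← mul_add]
        congr 1
        rw [← Finset.sum_erase_add Finset.univ (fun k => A.indicator (1 : ℝ → ℝ≥0∞) (u k))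
            (Finset.mem_univ i0),
          ← Finset.sum_erase_add Finset.univ (fun k => A.indicator (1 : ℝ → ℝ≥0∞) (u' k))
            (Finset.mem_univ i0)]
        have he : ∑ k ∈ Finset.univ.erase i0, A.indicator (1 : ℝ → ℝ≥0∞) (u k)
            = ∑ k ∈ Finset.univ.erase i0, A.indicator (1 : ℝ → ℝ≥0∞) (u' k) :=
          Finset.sum_congr rfl fun k hk => by rw [huu' k (Finset.ne_of_mem_erase hk)]
        rw [he]
        ring
      calc empMeas u' (A ∩ {a'}ᶜ) + ((1 : ℝ≥0∞) - r) * (c * dA') + (n : ℝ≥0∞)⁻¹ * dA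
            + (n : ℝ≥0∞)⁻¹ * dA'
          = empMeas u' (A ∩ {a'}ᶜ) + (((1 : ℝ≥0∞) - r) * (c * dA') + (n : ℝ≥0∞)⁻¹ * dA')
            + (n : ℝ≥0∞)⁻¹ * dA := by ring
        _ = empMeas u' (A ∩ {a'}ᶜ) + c * dA' + (n : ℝ≥0∞)⁻¹ * dA := by rw [hcomb]
        _ = empMeas u' A + (n : ℝ≥0∞)⁻¹ * dA := by rw [e1]
        _ = empMeas u A + (n : ℝ≥0∞)⁻¹ * dA' := e2.symm
    haveI hγprob : IsProbabilityMeasure γ := by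
      constructor
      calc γ Set.univ = (γ.map Prod.fst) Set.univ := by
            rw [Measure.map_apply measurable_fst MeasurableSet.univ, Set.preimage_univ]
        _ = 1 := by rw [hfstγ]; exact measure_univ
    have hW : WpPow p (empMeas u) ν ≤ ∫ z, dist z.1 z.2 ^ p ∂γ :=
      csInf_le (wp_image_bddBelow _ _) ⟨γ, ⟨hγprob, hfstγ, hsndγ⟩, rfl⟩
    linarith
  have h2 : WpPow p (empMeas u) ν - M / n ≤ WpPow p (empMeas u') ν := by
    rw [WpPow]
    exact le_csInf ((couplings_nonempty _ ν).image _) key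
  linarith


lemma wpPow_one_point_abs {n : ℕ} (hp : 1 ≤ p) (hC : 0 < C)
    (u u' : Fin n → ℝ) (i0 : Fin n) (huu' : ∀ k, k ≠ i0 → u k = u' k)
    (hu : ∀ k, |u k| ≤ C) (hu' : ∀ k, |u' k| ≤ C)
    (ν : Measure ℝ) [IsProbabilityMeasure ν] (hν : ν (Set.Icc (-C) C)ᶜ = 0) :
    |WpPow p (empMeas u) ν - WpPow p (empMeas u') ν| ≤ (2 * C) ^ p / n := by
  rw [abs_sub_le_iff]
  constructor
  · linarith [wpPow_one_point hp hC u u' i0 huu' hu hu' ν hν]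
  · linarith [wpPow_one_point hp hC u' u i0 (fun k hk => (huu' k hk).symm) hu' hu ν hν]

lemma wpPow_two_sample {n m : ℕ} (hp : 1 ≤ p) (hC : 0 < C)
    (u u' : Fin n → ℝ) (v v' : Fin m → ℝ) (i0 : Fin n) (j0 : Fin m)
    (hueq : ∀ k, k ≠ i0 → u k = u' k) (hveq : ∀ k, k ≠ j0 → v k = v' k)
    (hu : ∀ k, |u k| ≤ C) (hu' : ∀ k, |u' k| ≤ C)
    (hv : ∀ k, |v k| ≤ C) (hv' : ∀ k, |v' k| ≤ C) :
    |WpPow p (empMeas u) (empMeas v) - WpPow p (empMeas u') (empMeas v')| ≤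
      (2 * C) ^ p / n + (2 * C) ^ p / m := by
  haveI : Nonempty (Fin n) := ⟨i0⟩
  haveI : Nonempty (Fin m) := ⟨j0⟩
  have hp0 : (0 : ℝ) ≤ p := le_trans zero_le_one hp
  have memK : ∀ (t : ℝ), |t| ≤ C → t ∈ Set.Icc (-C) C := fun t ht =>
    Set.mem_Icc.mpr ⟨(abs_le.mp ht).1, (abs_le.mp ht).2⟩
  have hKv : empMeas v (Set.Icc (-C) C)ᶜ = 0 :=
    empMeas_compl_zero v measurableSet_Icc (fun k => memK _ (hv k))
  have hKu' : empMeas u' (Set.Icc (-C) C)ᶜ = 0 :=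
    empMeas_compl_zero u' measurableSet_Icc (fun k => memK _ (hu' k))
  have h1 : |WpPow p (empMeas u) (empMeas v) - WpPow p (empMeas u') (empMeas v)| ≤
      (2 * C) ^ p / n :=
    wpPow_one_point_abs hp hC u u' i0 hueq hu hu' _ hKv
  have h2 : |WpPow p (empMeas u') (empMeas v) - WpPow p (empMeas u') (empMeas v')| ≤
      (2 * C) ^ p / m := by
    rw [WpPow_symm hp0 (empMeas u') (empMeas v), WpPow_symm hp0 (empMeas u') (empMeas v')]
    exact wpPow_one_point_abs hp hC v v' j0 hveq hv hv' _ hKu'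
  calc |WpPow p (empMeas u) (empMeas v) - WpPow p (empMeas u') (empMeas v')|
      ≤ |WpPow p (empMeas u) (empMeas v) - WpPow p (empMeas u') (empMeas v)| +
        |WpPow p (empMeas u') (empMeas v) - WpPow p (empMeas u') (empMeas v')| :=
        abs_sub_le _ _ _
    _ ≤ (2 * C) ^ p / n + (2 * C) ^ p / m := add_le_add h1 h2

end Main

end
/-- **Bounded-difference property of the permuted sliced Wasserstein statistic under
cross-block transpositions** (key step in the proof of Lemma 11). Here the permutation
`π^{i,j}`, obtained from `π` by transposing its `i`-th and `j`-th entries, is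
`π * Equiv.swap i j`. -/
theorem permuted_sw_bounded_difference
    {d n m L : ℕ} (hn : 1 ≤ n) (hm : 1 ≤ m)
    {p D : ℝ} (hp : 1 ≤ p) (hD : 0 < D)
    (x : Fin (n + m) → Euc d) (hx : ∀ i, ‖x i‖ ≤ D)
    (θ : Fin L → Euc d) (hθ : ∀ ℓ, ‖θ ℓ‖ = 1)
    (π : Equiv.Perm (Fin (n + m)))
    (i j : Fin (n + m)) (hi : (i : ℕ) < n) (hj : n ≤ (j : ℕ)) :
    |swPermStat p n m x π θ - swPermStat p n m x (π * Equiv.swap i j) θ| ≤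
      (2 * D) ^ p / (n : ℝ) + (2 * D) ^ p / (m : ℝ) := by
  haveI : Nonempty (Fin n) := Fin.pos_iff_nonempty.mp hn
  haveI : Nonempty (Fin m) := Fin.pos_iff_nonempty.mp hm
  have hp0 : (0 : ℝ) ≤ p := le_trans zero_le_one hp
  have hM0 : (0 : ℝ) ≤ (2 * D) ^ p := Real.rpow_nonneg (by linarith) p
  have hb0 : (0 : ℝ) ≤ (2 * D) ^ p / (n : ℝ) + (2 * D) ^ p / (m : ℝ) := by
    have h1 : (0:ℝ) ≤ (n : ℝ) := Nat.cast_nonneg n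
    have h2 : (0:ℝ) ≤ (m : ℝ) := Nat.cast_nonneg m
    exact add_nonneg (div_nonneg hM0 h1) (div_nonneg hM0 h2)
  set i0 : Fin n := ⟨i.1, hi⟩ with hi0
  set j0 : Fin m := ⟨j.1 - n, by omega⟩ with hj0
  have hcast : Fin.castAdd m i0 = i := Fin.ext rfl
  have hnat : Fin.natAdd n j0 = j := Fin.ext (by simp [Fin.natAdd, hj0]; omega)
  have hper : ∀ ℓ : Fin L,
      |WpPow p (projMeasure (θ ℓ) (empMeas (fun k : Fin n => x (π (Fin.castAdd m k)))))
          (projMeasure (θ ℓ) (empMeas (fun k : Fin m => x (π (Fin.natAdd n k)))))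
        - WpPow p
          (projMeasure (θ ℓ) (empMeas (fun k : Fin n => x ((π * Equiv.swap i j) (Fin.castAdd m k)))))
          (projMeasure (θ ℓ) (empMeas (fun k : Fin m => x ((π * Equiv.swap i j) (Fin.natAdd n k)))))|
      ≤ (2 * D) ^ p / (n : ℝ) + (2 * D) ^ p / (m : ℝ) := by
    intro ℓ
    have hmeas : Measurable (fun y : Euc d => (inner ℝ (θ ℓ) y : ℝ)) :=
      (Continuous.inner continuous_const continuous_id).measurable
    have hbd : ∀ z : Fin (n + m), |(inner ℝ (θ ℓ) (x z) : ℝ)| ≤ D := fun z => by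
      calc |(inner ℝ (θ ℓ) (x z) : ℝ)| ≤ ‖θ ℓ‖ * ‖x z‖ := abs_real_inner_le_norm _ _
        _ = ‖x z‖ := by rw [hθ ℓ, one_mul]
        _ ≤ D := hx z
    rw [projMeasure, projMeasure, projMeasure, projMeasure, empMeas_map hmeas,
      empMeas_map hmeas, empMeas_map hmeas, empMeas_map hmeas]
    refine wpPow_two_sample hp hD _ _ _ _ i0 j0 ?_ ?_ (fun k => hbd _) (fun k => hbd _)
      (fun k => hbd _) (fun k => hbd _)
    · intro k hk
      have hne1 : Fin.castAdd m k ≠ i := by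
        intro h
        exact hk (Fin.ext (by simpa using congrArg Fin.val h))
      have hne2 : Fin.castAdd m k ≠ j := by
        intro h
        have := congrArg Fin.val h
        simp at this
        omega
      have hs : Equiv.swap i j (Fin.castAdd m k) = Fin.castAdd m k :=
        Equiv.swap_apply_of_ne_of_ne hne1 hne2
      simp [Equiv.Perm.mul_apply, hs]
    · intro k hk
      have hne1 : Fin.natAdd n k ≠ i := by
        intro h
        have := congrArg Fin.val h
        simp at this
        omega
      have hne2 : Fin.natAdd n k ≠ j := by
        intro h
        apply hk
        have := congrArg Fin.val h
        simp at this
        exact Fin.ext (by simp [hj0]; omega)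
      have hs : Equiv.swap i j (Fin.natAdd n k) = Fin.natAdd n k :=
        Equiv.swap_apply_of_ne_of_ne hne1 hne2
      simp [Equiv.Perm.mul_apply, hs]
  unfold swPermStat swStat
  rw [← mul_sub, abs_mul, abs_of_nonneg (by positivity : (0:ℝ) ≤ ((L : ℝ))⁻¹),
    ← Finset.sum_sub_distrib]
  have hsum : |∑ ℓ : Fin L,
      (WpPow p (projMeasure (θ ℓ) (empMeas (fun k : Fin n => x (π (Fin.castAdd m k)))))
          (projMeasure (θ ℓ) (empMeas (fun k : Fin m => x (π (Fin.natAdd n k)))))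
        - WpPow p
          (projMeasure (θ ℓ) (empMeas (fun k : Fin n => x ((π * Equiv.swap i j) (Fin.castAdd m k)))))
          (projMeasure (θ ℓ) (empMeas (fun k : Fin m => x ((π * Equiv.swap i j) (Fin.natAdd n k))))))|
      ≤ (L : ℝ) * ((2 * D) ^ p / (n : ℝ) + (2 * D) ^ p / (m : ℝ)) := by
    calc _ ≤ ∑ ℓ : Fin L, |WpPow p (projMeasure (θ ℓ) (empMeas (fun k : Fin n => x (π (Fin.castAdd m k)))))
          (projMeasure (θ ℓ) (empMeas (fun k : Fin m => x (π (Fin.natAdd n k)))))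
        - WpPow p
          (projMeasure (θ ℓ) (empMeas (fun k : Fin n => x ((π * Equiv.swap i j) (Fin.castAdd m k)))))
          (projMeasure (θ ℓ) (empMeas (fun k : Fin m => x ((π * Equiv.swap i j) (Fin.natAdd n k)))))| :=
        Finset.abs_sum_le_sum_abs _ _
      _ ≤ ∑ _ℓ : Fin L, ((2 * D) ^ p / (n : ℝ) + (2 * D) ^ p / (m : ℝ)) :=
        Finset.sum_le_sum (fun ℓ _ => hper ℓ)
      _ = (L : ℝ) * ((2 * D) ^ p / (n : ℝ) + (2 * D) ^ p / (m : ℝ)) := by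
        rw [Finset.sum_const, Finset.card_univ, Fintype.card_fin, nsmul_eq_mul]
  calc ((L : ℝ))⁻¹ * |_| ≤ ((L : ℝ))⁻¹ * ((L : ℝ) * ((2 * D) ^ p / (n : ℝ) + (2 * D) ^ p / (m : ℝ))) :=
      mul_le_mul_of_nonneg_left hsum (by positivity)
    _ ≤ (2 * D) ^ p / (n : ℝ) + (2 * D) ^ p / (m : ℝ) := by
      rcases Nat.eq_zero_or_pos L with hL | hL
      · subst hL; simpa using hb0
      · rw [← mul_assoc, inv_mul_cancel₀ (by exact_mod_cast hL.ne' : (L:ℝ) ≠ 0), one_mul]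
end

section
/- Sliced Wasserstein distance between two-point measures sharing the same atoms (key identity in the proof of Proposition 7): Let d ≥ 1, p ≥ 1, x, v ∈ ℝ^d with x ≠ v, and p_0, q_0 ∈ [0,1]. Let μ_0 = p_0 δ_x + (1−p_0) δ_v and ν_0 = q_0 δ_x + (1−q_0) δ_v. Then SW_p^p(μ_0, ν_0) = |p_0 − q_0| · ‖x − v‖^p · ∫_{S^{d−1}} |θ_1|^p dσ(θ), where θ_1 denotes the first coordinate of θ. -/
open MeasureTheory Finset
open scoped ENNReal

noncomputable section

section AuxProofs

open MeasureTheory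

variable {p : ℝ}

lemma my_integrable_dirac {X : Type*} [MeasurableSpace X] {f : X → ℝ}
    (hf : StronglyMeasurable f) (z : X) : Integrable f (Measure.dirac z) := by
  refine ⟨hf.aestronglyMeasurable, ?_⟩
  simp only [HasFiniteIntegral]
  rw [lintegral_dirac' z hf.measurable.enorm]
  exact enorm_lt_top

set_option maxHeartbeats 1000000 in
lemma two_point_lower (hp : 1 ≤ p) (a b : ℝ) {p₀ q₀ : ℝ}
    (hp₀ : p₀ ∈ Set.Icc (0:ℝ) 1) (hq₀ : q₀ ∈ Set.Icc (0:ℝ) 1)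
    (γ : Measure (ℝ × ℝ)) (hγ : γ ∈ couplings
      (ENNReal.ofReal p₀ • Measure.dirac a + ENNReal.ofReal (1 - p₀) • Measure.dirac b)
      (ENNReal.ofReal q₀ • Measure.dirac a + ENNReal.ofReal (1 - q₀) • Measure.dirac b)) :
    |p₀ - q₀| * |a - b| ^ p ≤ ∫ xy, dist xy.1 xy.2 ^ p ∂γ := by
  obtain ⟨hγP, h1, h2⟩ := hγ
  haveI := hγP
  have hpp : (0:ℝ) < p := lt_of_lt_of_le one_pos hp
  by_cases hab : a = b
  · subst hab
    rw [sub_self, abs_zero, Real.zero_rpow hpp.ne', mul_zero]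
    exact integral_nonneg fun xy => Real.rpow_nonneg dist_nonneg p
  · have hfst : ∀ s : Set ℝ, MeasurableSet s →
        γ (Prod.fst ⁻¹' s) = ENNReal.ofReal p₀ * Measure.dirac a s
          + ENNReal.ofReal (1 - p₀) * Measure.dirac b s := by
      intro s hs
      rw [← Measure.map_apply measurable_fst hs, h1]
      simp [Measure.add_apply, Measure.smul_apply, smul_eq_mul]
    have hsnd : ∀ s : Set ℝ, MeasurableSet s →
        γ (Prod.snd ⁻¹' s) = ENNReal.ofReal q₀ * Measure.dirac a s
          + ENNReal.ofReal (1 - q₀) * Measure.dirac b s := by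
      intro s hs
      rw [← Measure.map_apply measurable_snd hs, h2]
      simp [Measure.add_apply, Measure.smul_apply, smul_eq_mul]
    have hA : γ (Prod.snd ⁻¹' {b}) = ENNReal.ofReal (1 - q₀) := by
      rw [hsnd _ (measurableSet_singleton b)]
      simp [Measure.dirac_apply, Set.indicator, hab]
    have hB : γ (Prod.fst ⁻¹' ({a}ᶜ)) = ENNReal.ofReal (1 - p₀) := by
      rw [hfst _ (measurableSet_singleton a).compl]
      simp [Measure.dirac_apply, Set.indicator, Ne.symm hab]
    have hC : γ (Prod.snd ⁻¹' {a}) = ENNReal.ofReal q₀ := by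
      rw [hsnd _ (measurableSet_singleton a)]
      simp [Measure.dirac_apply, Set.indicator, Ne.symm hab]
    have hD : γ (Prod.fst ⁻¹' ({b}ᶜ)) = ENNReal.ofReal p₀ := by
      rw [hfst _ (measurableSet_singleton b).compl]
      simp [Measure.dirac_apply, Set.indicator, hab]
    -- lower bounds on diagonal-off masses
    have hS1 : ENNReal.ofReal (p₀ - q₀) ≤ γ (({a} : Set ℝ) ×ˢ ({b} : Set ℝ)) := by
      have hsub : (Prod.snd ⁻¹' ({b} : Set ℝ)) ⊆
          (({a} : Set ℝ) ×ˢ ({b} : Set ℝ)) ∪ Prod.fst ⁻¹' ({a}ᶜ : Set ℝ) := by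
        rintro ⟨x1, x2⟩ hx
        by_cases hx1 : x1 = a
        · exact Or.inl ⟨hx1, hx⟩
        · exact Or.inr hx1
      have hle : ENNReal.ofReal (1 - q₀) ≤ γ (({a} : Set ℝ) ×ˢ ({b} : Set ℝ))
          + ENNReal.ofReal (1 - p₀) := by
        rw [← hA, ← hB]
        exact (measure_mono hsub).trans (measure_union_le _ _)
      have := tsub_le_iff_right.mpr hle
      calc ENNReal.ofReal (p₀ - q₀)
          = ENNReal.ofReal (1 - q₀) - ENNReal.ofReal (1 - p₀) := by
            rw [← ENNReal.ofReal_sub _ (by linarith [hp₀.2] : (0:ℝ) ≤ 1 - p₀)]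
            ring_nf
        _ ≤ _ := this
    have hS2 : ENNReal.ofReal (q₀ - p₀) ≤ γ (({b} : Set ℝ) ×ˢ ({a} : Set ℝ)) := by
      have hsub : (Prod.snd ⁻¹' ({a} : Set ℝ)) ⊆
          (({b} : Set ℝ) ×ˢ ({a} : Set ℝ)) ∪ Prod.fst ⁻¹' ({b}ᶜ : Set ℝ) := by
        rintro ⟨x1, x2⟩ hx
        by_cases hx1 : x1 = b
        · exact Or.inl ⟨hx1, hx⟩
        · exact Or.inr hx1
      have hle : ENNReal.ofReal q₀ ≤ γ (({b} : Set ℝ) ×ˢ ({a} : Set ℝ))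
          + ENNReal.ofReal p₀ := by
        rw [← hC, ← hD]
        exact (measure_mono hsub).trans (measure_union_le _ _)
      have := tsub_le_iff_right.mpr hle
      calc ENNReal.ofReal (q₀ - p₀)
          = ENNReal.ofReal q₀ - ENNReal.ofReal p₀ :=
            ENNReal.ofReal_sub _ hp₀.1
        _ ≤ _ := this
    set U : Set (ℝ × ℝ) := (({a} : Set ℝ) ×ˢ ({b} : Set ℝ)) ∪ (({b} : Set ℝ) ×ˢ ({a} : Set ℝ))
      with hU
    have hUnion : ENNReal.ofReal |p₀ - q₀| ≤ γ U := by
      rcases le_total q₀ p₀ with h | h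
      · rw [abs_of_nonneg (sub_nonneg.2 h)]
        exact hS1.trans (measure_mono Set.subset_union_left)
      · rw [abs_of_nonpos (sub_nonpos.2 h), neg_sub]
        exact hS2.trans (measure_mono Set.subset_union_right)
    -- integrability
    have hN1 : γ (Prod.fst ⁻¹' ({a, b} : Set ℝ)ᶜ) = 0 := by
      rw [hfst _ (by measurability : MeasurableSet (({a, b} : Set ℝ)ᶜ))]
      simp [Measure.dirac_apply, Set.indicator]
    have hN2 : γ (Prod.snd ⁻¹' ({a, b} : Set ℝ)ᶜ) = 0 := by
      rw [hsnd _ (by measurability : MeasurableSet (({a, b} : Set ℝ)ᶜ))]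
      simp [Measure.dirac_apply, Set.indicator]
    have hae : ∀ᵐ xy ∂γ, xy.1 ∈ ({a, b} : Set ℝ) ∧ xy.2 ∈ ({a, b} : Set ℝ) := by
      rw [MeasureTheory.ae_iff]
      refine measure_mono_null ?_ (measure_union_null hN1 hN2)
      intro xy hxy
      simp only [Set.mem_setOf_eq, not_and_or] at hxy
      rcases hxy with h | h
      · exact Or.inl h
      · exact Or.inr h
    have hbound : ∀ᵐ xy ∂γ, ‖dist xy.1 xy.2 ^ p‖ ≤ |a - b| ^ p := by
      refine hae.mono fun xy hxy => ?_
      rw [Real.norm_of_nonneg (Real.rpow_nonneg dist_nonneg p)]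
      refine Real.rpow_le_rpow dist_nonneg ?_ hpp.le
      rcases hxy.1 with h1 | h1 <;> rcases hxy.2 with h2 | h2 <;>
        simp_all [Real.dist_eq, abs_sub_comm a b, abs_nonneg]
    have hcont : Continuous fun xy : ℝ × ℝ => dist xy.1 xy.2 ^ p :=
      (continuous_fst.dist continuous_snd).rpow_const fun _ => Or.inr hpp.le
    have hint : Integrable (fun xy : ℝ × ℝ => dist xy.1 xy.2 ^ p) γ :=
      Integrable.mono' (integrable_const (|a - b| ^ p)) hcont.aestronglyMeasurable hbound
    have hmeasU : MeasurableSet U :=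
      ((measurableSet_singleton a).prod (measurableSet_singleton b)).union
        ((measurableSet_singleton b).prod (measurableSet_singleton a))
    have htoReal : |p₀ - q₀| ≤ (γ U).toReal := by
      rw [← ENNReal.toReal_ofReal (abs_nonneg (p₀ - q₀))]
      exact ENNReal.toReal_mono (measure_ne_top γ U) hUnion
    calc |p₀ - q₀| * |a - b| ^ p
        ≤ (γ U).toReal * |a - b| ^ p :=
          mul_le_mul_of_nonneg_right htoReal (Real.rpow_nonneg (abs_nonneg _) _)
      _ = ∫ xy in U, dist xy.1 xy.2 ^ p ∂γ := by
          rw [setIntegral_congr_fun hmeasU (g := fun _ => |a - b| ^ p) ?_, setIntegral_const,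
            smul_eq_mul, Measure.real]
          rintro ⟨x1, x2⟩ hxy
          rcases hxy with ⟨hx1, hx2⟩ | ⟨hx1, hx2⟩ <;>
            simp_all [Real.dist_eq, abs_sub_comm a b]
      _ ≤ ∫ xy, dist xy.1 xy.2 ^ p ∂γ :=
          setIntegral_le_integral hint (Filter.Eventually.of_forall fun xy =>
            Real.rpow_nonneg dist_nonneg p)

lemma two_point_mem (hp : 1 ≤ p) (a b : ℝ) {p₀ q₀ : ℝ}
    (hq0 : 0 ≤ q₀) (hqp : q₀ ≤ p₀) (hp1 : p₀ ≤ 1) :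
    (p₀ - q₀) * |a - b| ^ p ∈
      (fun γ : Measure (ℝ × ℝ) => ∫ xy, dist xy.1 xy.2 ^ p ∂γ) ''
        couplings
          (ENNReal.ofReal p₀ • Measure.dirac a + ENNReal.ofReal (1 - p₀) • Measure.dirac b)
          (ENNReal.ofReal q₀ • Measure.dirac a + ENNReal.ofReal (1 - q₀) • Measure.dirac b) := by
  have hpp : (0:ℝ) < p := lt_of_lt_of_le one_pos hp
  have h0 : (0:ℝ) ≤ p₀ - q₀ := sub_nonneg.2 hqp
  have h1 : (0:ℝ) ≤ 1 - p₀ := by linarith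
  have hcont : Continuous fun xy : ℝ × ℝ => dist xy.1 xy.2 ^ p :=
    (continuous_fst.dist continuous_snd).rpow_const fun _ => Or.inr hpp.le
  have hintd : ∀ z : ℝ × ℝ, ∀ c : ℝ,
      Integrable (fun xy : ℝ × ℝ => dist xy.1 xy.2 ^ p) (ENNReal.ofReal c • Measure.dirac z) :=
    fun z c => (my_integrable_dirac hcont.stronglyMeasurable z).smul_measure ENNReal.ofReal_ne_top
  refine ⟨ENNReal.ofReal q₀ • Measure.dirac ((a, a) : ℝ × ℝ)
      + ENNReal.ofReal (p₀ - q₀) • Measure.dirac ((a, b) : ℝ × ℝ)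
      + ENNReal.ofReal (1 - p₀) • Measure.dirac ((b, b) : ℝ × ℝ), ⟨?_, ?_, ?_⟩, ?_⟩
  · constructor
    simp only [Measure.add_apply, Measure.smul_apply, smul_eq_mul,
      MeasureTheory.measure_univ, mul_one]
    rw [← ENNReal.ofReal_add hq0 h0, ← ENNReal.ofReal_add (by linarith) h1]
    norm_num
  · rw [Measure.map_add _ _ measurable_fst, Measure.map_add _ _ measurable_fst,
      Measure.map_smul, Measure.map_smul, Measure.map_smul,
      Measure.map_dirac' measurable_fst, Measure.map_dirac' measurable_fst,
      Measure.map_dirac' measurable_fst]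
    rw [← add_smul, ← ENNReal.ofReal_add hq0 h0]
    norm_num
  · rw [Measure.map_add _ _ measurable_snd, Measure.map_add _ _ measurable_snd,
      Measure.map_smul, Measure.map_smul, Measure.map_smul,
      Measure.map_dirac' measurable_snd, Measure.map_dirac' measurable_snd,
      Measure.map_dirac' measurable_snd]
    rw [add_assoc, ← add_smul, ← ENNReal.ofReal_add h0 h1]
    norm_num
  · simp only
    rw [integral_add_measure ((hintd _ _).add_measure (hintd _ _)) (hintd _ _),
      integral_add_measure (hintd _ _) (hintd _ _),
      integral_smul_measure, integral_smul_measure, integral_smul_measure,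
      integral_dirac' _ _ hcont.stronglyMeasurable,
      integral_dirac' _ _ hcont.stronglyMeasurable,
      integral_dirac' _ _ hcont.stronglyMeasurable]
    simp only [dist_self, Real.zero_rpow hpp.ne', Real.dist_eq, smul_eq_mul, mul_zero,
      ENNReal.toReal_ofReal hq0, ENNReal.toReal_ofReal h0, ENNReal.toReal_ofReal h1]
    ring

lemma two_point_mem' (hp : 1 ≤ p) (a b : ℝ) {p₀ q₀ : ℝ}
    (hp0 : 0 ≤ p₀) (hpq : p₀ ≤ q₀) (hq1 : q₀ ≤ 1) :
    (q₀ - p₀) * |a - b| ^ p ∈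
      (fun γ : Measure (ℝ × ℝ) => ∫ xy, dist xy.1 xy.2 ^ p ∂γ) ''
        couplings
          (ENNReal.ofReal p₀ • Measure.dirac a + ENNReal.ofReal (1 - p₀) • Measure.dirac b)
          (ENNReal.ofReal q₀ • Measure.dirac a + ENNReal.ofReal (1 - q₀) • Measure.dirac b) := by
  have hpp : (0:ℝ) < p := lt_of_lt_of_le one_pos hp
  have h0 : (0:ℝ) ≤ q₀ - p₀ := sub_nonneg.2 hpq
  have h1 : (0:ℝ) ≤ 1 - q₀ := by linarith
  have hcont : Continuous fun xy : ℝ × ℝ => dist xy.1 xy.2 ^ p :=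
    (continuous_fst.dist continuous_snd).rpow_const fun _ => Or.inr hpp.le
  have hintd : ∀ z : ℝ × ℝ, ∀ c : ℝ,
      Integrable (fun xy : ℝ × ℝ => dist xy.1 xy.2 ^ p) (ENNReal.ofReal c • Measure.dirac z) :=
    fun z c => (my_integrable_dirac hcont.stronglyMeasurable z).smul_measure ENNReal.ofReal_ne_top
  refine ⟨ENNReal.ofReal p₀ • Measure.dirac ((a, a) : ℝ × ℝ)
      + ENNReal.ofReal (q₀ - p₀) • Measure.dirac ((b, a) : ℝ × ℝ)
      + ENNReal.ofReal (1 - q₀) • Measure.dirac ((b, b) : ℝ × ℝ), ⟨?_, ?_, ?_⟩, ?_⟩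
  · constructor
    simp only [Measure.add_apply, Measure.smul_apply, smul_eq_mul,
      MeasureTheory.measure_univ, mul_one]
    rw [← ENNReal.ofReal_add hp0 h0, ← ENNReal.ofReal_add (by linarith) h1]
    norm_num
  · rw [Measure.map_add _ _ measurable_fst, Measure.map_add _ _ measurable_fst,
      Measure.map_smul, Measure.map_smul, Measure.map_smul,
      Measure.map_dirac' measurable_fst, Measure.map_dirac' measurable_fst,
      Measure.map_dirac' measurable_fst]
    rw [add_assoc, ← add_smul, ← ENNReal.ofReal_add h0 h1]
    norm_num
  · rw [Measure.map_add _ _ measurable_snd, Measure.map_add _ _ measurable_snd,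
      Measure.map_smul, Measure.map_smul, Measure.map_smul,
      Measure.map_dirac' measurable_snd, Measure.map_dirac' measurable_snd,
      Measure.map_dirac' measurable_snd]
    rw [← add_smul, ← ENNReal.ofReal_add hp0 h0]
    norm_num
  · simp only
    rw [integral_add_measure ((hintd _ _).add_measure (hintd _ _)) (hintd _ _),
      integral_add_measure (hintd _ _) (hintd _ _),
      integral_smul_measure, integral_smul_measure, integral_smul_measure,
      integral_dirac' _ _ hcont.stronglyMeasurable,
      integral_dirac' _ _ hcont.stronglyMeasurable,
      integral_dirac' _ _ hcont.stronglyMeasurable]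
    simp only [dist_self, Real.zero_rpow hpp.ne', Real.dist_eq, smul_eq_mul, mul_zero,
      ENNReal.toReal_ofReal hp0, ENNReal.toReal_ofReal h0, ENNReal.toReal_ofReal h1]
    rw [abs_sub_comm b a]
    ring

lemma wpPow_two_point (hp : 1 ≤ p) (a b : ℝ) {p₀ q₀ : ℝ}
    (hp₀ : p₀ ∈ Set.Icc (0:ℝ) 1) (hq₀ : q₀ ∈ Set.Icc (0:ℝ) 1) :
    WpPow p (ENNReal.ofReal p₀ • Measure.dirac a + ENNReal.ofReal (1 - p₀) • Measure.dirac b)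
      (ENNReal.ofReal q₀ • Measure.dirac a + ENNReal.ofReal (1 - q₀) • Measure.dirac b) =
    |p₀ - q₀| * |a - b| ^ p := by
  rcases le_total q₀ p₀ with h | h
  · have habs : |p₀ - q₀| = p₀ - q₀ := abs_of_nonneg (sub_nonneg.2 h)
    have hmem := two_point_mem hp a b hq₀.1 h hp₀.2
    have hlb : ∀ r ∈ (fun γ : Measure (ℝ × ℝ) => ∫ xy, dist xy.1 xy.2 ^ p ∂γ) ''
        couplings
          (ENNReal.ofReal p₀ • Measure.dirac a + ENNReal.ofReal (1 - p₀) • Measure.dirac b)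
          (ENNReal.ofReal q₀ • Measure.dirac a + ENNReal.ofReal (1 - q₀) • Measure.dirac b),
        (p₀ - q₀) * |a - b| ^ p ≤ r := by
      rintro r ⟨γ, hγ, rfl⟩
      rw [← habs]
      exact two_point_lower hp a b hp₀ hq₀ γ hγ
    rw [WpPow, habs]
    exact le_antisymm (csInf_le ⟨_, hlb⟩ hmem) (le_csInf ⟨_, hmem⟩ hlb)
  · have habs : |p₀ - q₀| = q₀ - p₀ := by rw [abs_sub_comm]; exact abs_of_nonneg (sub_nonneg.2 h)
    have hmem := two_point_mem' hp a b hp₀.1 h hq₀.2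
    have hlb : ∀ r ∈ (fun γ : Measure (ℝ × ℝ) => ∫ xy, dist xy.1 xy.2 ^ p ∂γ) ''
        couplings
          (ENNReal.ofReal p₀ • Measure.dirac a + ENNReal.ofReal (1 - p₀) • Measure.dirac b)
          (ENNReal.ofReal q₀ • Measure.dirac a + ENNReal.ofReal (1 - q₀) • Measure.dirac b),
        (q₀ - p₀) * |a - b| ^ p ≤ r := by
      rintro r ⟨γ, hγ, rfl⟩
      rw [← habs]
      exact two_point_lower hp a b hp₀ hq₀ γ hγ
    rw [WpPow, habs]
    exact le_antisymm (csInf_le ⟨_, hlb⟩ hmem) (le_csInf ⟨_, hmem⟩ hlb)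

end AuxProofs

end
/-- **Sliced Wasserstein distance between two-point measures sharing the same atoms**
(key identity in the proof of Proposition 7). -/
theorem sw_two_point_identity
    {d : ℕ} (hd : 0 < d) {p : ℝ} (hp : 1 ≤ p)
    (σ : Measure (Euc d)) [IsProbabilityMeasure σ]
    (hσs : σ (Metric.sphere (0 : Euc d) 1) = 1)
    (hσr : ∀ Q : Euc d ≃ₗᵢ[ℝ] Euc d, σ.map ⇑Q = σ)
    (x v : Euc d) (hxv : x ≠ v)
    (p₀ q₀ : ℝ) (hp₀ : p₀ ∈ Set.Icc (0 : ℝ) 1) (hq₀ : q₀ ∈ Set.Icc (0 : ℝ) 1) :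
    SWpPow p σ
      (ENNReal.ofReal p₀ • Measure.dirac x + ENNReal.ofReal (1 - p₀) • Measure.dirac v)
      (ENNReal.ofReal q₀ • Measure.dirac x + ENNReal.ofReal (1 - q₀) • Measure.dirac v) =
    |p₀ - q₀| * ‖x - v‖ ^ p * ∫ θ, |θ (⟨0, hd⟩ : Fin d)| ^ p ∂σ := by
  have hpp : (0:ℝ) < p := lt_of_lt_of_le one_pos hp
  have hw : x - v ≠ 0 := sub_ne_zero.2 hxv
  have hcn : (0:ℝ) < ‖x - v‖ := norm_pos_iff.2 hw
  set i₀ : Fin d := ⟨0, hd⟩ with hi₀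
  set e₁ : Euc d := EuclideanSpace.single i₀ (1:ℝ) with he₁
  set u : Euc d := ‖x - v‖⁻¹ • (x - v) with hu_def
  have hu : ‖u‖ = 1 := norm_smul_inv_norm hw
  have he : ‖e₁‖ = 1 := by simp [he₁]
  have hrw : ∀ θ : Euc d, |(inner ℝ θ (x - v) : ℝ)| ^ p = ‖x - v‖ ^ p * |(inner ℝ θ u : ℝ)| ^ p := by
    intro θ
    have hxv' : (inner ℝ θ (x - v) : ℝ) = ‖x - v‖ * (inner ℝ θ u : ℝ) := by
      conv_lhs => rw [show x - v = ‖x - v‖ • u from (smul_inv_smul₀ hcn.ne' (x - v)).symm]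
      rw [real_inner_smul_right]
    rw [hxv', abs_mul, abs_of_nonneg (norm_nonneg _),
      Real.mul_rpow (norm_nonneg _) (abs_nonneg _)]
  have key : ∀ θ : Euc d,
      WpPow p
        (projMeasure θ (ENNReal.ofReal p₀ • Measure.dirac x
          + ENNReal.ofReal (1 - p₀) • Measure.dirac v))
        (projMeasure θ (ENNReal.ofReal q₀ • Measure.dirac x
          + ENNReal.ofReal (1 - q₀) • Measure.dirac v))
      = |p₀ - q₀| * (‖x - v‖ ^ p * |(inner ℝ θ u : ℝ)| ^ p) := by
    intro θ
    have hm : Measurable fun y : Euc d => (inner ℝ θ y : ℝ) :=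
      (Continuous.inner continuous_const continuous_id).measurable
    have hproj : ∀ (c₁ c₂ : ℝ≥0∞) (y z : Euc d),
        projMeasure θ (c₁ • Measure.dirac y + c₂ • Measure.dirac z)
          = c₁ • Measure.dirac ((inner ℝ θ y : ℝ)) + c₂ • Measure.dirac ((inner ℝ θ z : ℝ)) := by
      intro c₁ c₂ y z
      rw [projMeasure, Measure.map_add _ _ hm, Measure.map_smul, Measure.map_smul,
        Measure.map_dirac' hm, Measure.map_dirac' hm]
    rw [hproj, hproj, wpPow_two_point hp _ _ hp₀ hq₀, ← hrw θ, ← inner_sub_right]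
  rw [SWpPow, integral_congr_ae (Filter.Eventually.of_forall key), integral_const_mul,
    integral_const_mul]
  -- rotation invariance
  haveI : FiniteDimensional ℝ (Euc d) := by infer_instance
  set R := Submodule.reflection (ℝ ∙ (u - e₁))ᗮ with hR
  have hRu : R u = e₁ := Submodule.reflection_sub (by rw [hu, he])
  have hRe : R e₁ = u := by rw [← hRu]; exact Submodule.reflection_reflection _ u
  have hmeasf : Continuous fun θ : Euc d => |(inner ℝ θ u : ℝ)| ^ p :=
    ((Continuous.inner continuous_id continuous_const).abs).rpow_const fun _ => Or.inr hpp.le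
  have hσR : σ.map ⇑R = σ := hσr R
  have hrot : ∫ θ, |(inner ℝ θ u : ℝ)| ^ p ∂σ = ∫ θ, |θ i₀| ^ p ∂σ := by
    conv_lhs => rw [← hσR]
    rw [integral_map R.continuous.measurable.aemeasurable
      (by rw [hσR]; exact hmeasf.aestronglyMeasurable)]
    refine integral_congr_ae (Filter.Eventually.of_forall fun θ => ?_)
    show |(inner ℝ (R θ) u : ℝ)| ^ p = |θ i₀| ^ p
    have hinner : (inner ℝ (R θ) u : ℝ) = (inner ℝ θ e₁ : ℝ) := by
      conv_lhs => rw [← hRe]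
      exact R.inner_map_map θ e₁
    rw [hinner, he₁]
    norm_num [EuclideanSpace.inner_single_right]
  rw [hrot]
  ring
end

section
/- Lower bound on the spherical moment constant via Gamma function estimates (key step in the proof of Proposition 7): Let d ≥ 2 be an integer and p ≥ 1 a real number. Then Γ((p+1)/2) · Γ(d/2) / ( √π · Γ((d+p)/2) ) ≥ √(2/e) · ( (p+1) / (e(d+p)) )^{p/2}. In particular, the proof yields the intermediate bounds Γ((p+1)/2) ≥ √(2π) · ((p+1)/2)^{p/2} · e^{−(p+1)/2} and Γ(d/2) / Γ((d+p)/2) ≥ ((d+p)/2)^{−p/2}. -/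
open Real

-- key log inequality via Hermite-Hadamard / tangent line for 1/t
lemma key_log (x : ℝ) (hx : 0 < x) : 1 ≤ (x + 1/2) * Real.log (1 + 1/x) := by
  have hm : (0:ℝ) < x + 1/2 := by linarith
  have h1 : Real.log (1 + 1/x) = ∫ t in x..(x+1), t⁻¹ := by
    rw [integral_inv_of_pos hx (by linarith)]
    congr 1
    field_simp
  have h2 : (∫ t in x..(x+1), (2*(x+1/2) - t)/(x+1/2)^2) ≤ ∫ t in x..(x+1), t⁻¹ := by
    apply intervalIntegral.integral_mono_on (by linarith)
    · exact (Continuous.intervalIntegrable (by continuity) _ _)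
    · apply ContinuousOn.intervalIntegrable
      apply ContinuousOn.inv₀ continuousOn_id
      intro t ht
      rw [Set.uIcc_of_le (by linarith)] at ht
      exact ne_of_gt (lt_of_lt_of_le hx ht.1)
    · intro t ht
      have htpos : 0 < t := lt_of_lt_of_le hx ht.1
      rw [div_le_iff₀ (by positivity), ← sub_nonneg]
      have : t⁻¹ * (x+1/2)^2 - (2*(x+1/2) - t) = (t - (x+1/2))^2 / t := by
        field_simp; ring
      rw [this]
      positivity
  have h3 : (∫ t in x..(x+1), (2*(x+1/2) - t)/(x+1/2)^2) = 1/(x+1/2) := by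
    have : ∀ t : ℝ, (2*(x+1/2) - t)/(x+1/2)^2
        = (2*(x+1/2))/(x+1/2)^2 - t * ((x+1/2)^2)⁻¹ := by
      intro t; field_simp
    simp_rw [this]
    rw [intervalIntegral.integral_sub (Continuous.intervalIntegrable (by continuity) _ _)
      (Continuous.intervalIntegrable (by continuity) _ _),
      intervalIntegral.integral_const, intervalIntegral.integral_mul_const,
      integral_id]
    rw [smul_eq_mul]
    field_simp
    ring
  have h4 : 1/(x+1/2) ≤ Real.log (1 + 1/x) := by rw [h1, ← h3]; exact h2
  calc (1:ℝ) = (x+1/2) * (1/(x+1/2)) := by field_simp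
  _ ≤ _ := mul_le_mul_of_nonneg_left h4 hm.le

lemma wendel {x a : ℝ} (hx : 0 < x) (ha0 : 0 ≤ a) (ha1 : a ≤ 1) :
    Real.Gamma (x + a) ≤ x ^ a * Real.Gamma x := by
  have hc := Real.convexOn_log_Gamma
  have h := hc.2 (Set.mem_Ioi.2 hx) (Set.mem_Ioi.2 (by linarith : (0:ℝ) < x+1))
      (by linarith : (0:ℝ) ≤ 1 - a) ha0 (by ring)
  simp only [smul_eq_mul, Function.comp] at h
  rw [(by ring : (1-a) * x + a * (x+1) = x + a),
    Real.Gamma_add_one (ne_of_gt hx),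
    Real.log_mul (ne_of_gt hx) (ne_of_gt (Real.Gamma_pos_of_pos hx))] at h
  have h2 : Real.log (Real.Gamma (x+a)) ≤ a * Real.log x + Real.log (Real.Gamma x) := by
    nlinarith [h]
  calc Real.Gamma (x+a) = Real.exp (Real.log (Real.Gamma (x+a))) :=
        (Real.exp_log (Real.Gamma_pos_of_pos (by linarith))).symm
  _ ≤ Real.exp (a * Real.log x + Real.log (Real.Gamma x)) := Real.exp_le_exp.2 h2
  _ = x ^ a * Real.Gamma x := by
      rw [Real.exp_add, Real.exp_log (Real.Gamma_pos_of_pos hx),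
        Real.rpow_def_of_pos hx, mul_comm a]

lemma wendel_iter (n : ℕ) : ∀ x a : ℝ, 0 < x → 0 ≤ a → a ≤ n →
    Real.Gamma (x + a) ≤ (x + a) ^ a * Real.Gamma x := by
  induction n with
  | zero =>
    intro x a hx ha0 hn
    simp only [Nat.cast_zero] at hn
    have : a = 0 := le_antisymm hn ha0
    simp [this]
  | succ n ih =>
    intro x a hx ha0 hn
    by_cases hle : a ≤ 1
    · calc Real.Gamma (x + a) ≤ x ^ a * Real.Gamma x := wendel hx ha0 hle
      _ ≤ (x + a) ^ a * Real.Gamma x :=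
          mul_le_mul_of_nonneg_right
            (Real.rpow_le_rpow hx.le (by linarith) ha0)
            (Real.Gamma_pos_of_pos hx).le
    · push_neg at hle
      have h1 : Real.Gamma (x + a) = Real.Gamma ((x+1) + (a-1)) := by ring_nf
      have h2 := ih (x+1) (a-1) (by linarith) (by linarith) (by push_cast at hn ⊢; linarith)
      have hxa : (0:ℝ) < x + a := by linarith
      rw [h1]
      calc Real.Gamma ((x+1) + (a-1)) ≤ ((x+1)+(a-1)) ^ (a-1) * Real.Gamma (x+1) := h2
      _ = (x+a) ^ (a-1) * (x * Real.Gamma x) := by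
          rw [Real.Gamma_add_one (ne_of_gt hx), (by ring : x+1+(a-1) = x+a)]
      _ ≤ (x+a) ^ (a-1) * ((x+a) * Real.Gamma x) :=
          mul_le_mul_of_nonneg_left
            (mul_le_mul_of_nonneg_right (by linarith) (Real.Gamma_pos_of_pos hx).le)
            (Real.rpow_nonneg hxa.le _)
      _ = (x + a) ^ a * Real.Gamma x := by
          rw [← mul_assoc, ← Real.rpow_add_one (ne_of_gt hxa) (a-1), sub_add_cancel]

noncomputable def F (x : ℝ) : ℝ := Real.sqrt (2*π) * x ^ (x - 1/2) * Real.exp (-x)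

lemma F_eq {x : ℝ} (hx : 0 < x) :
    F x = Real.sqrt (2*π) * Real.exp ((x - 1/2) * Real.log x - x) := by
  rw [F, Real.rpow_def_of_pos hx, mul_assoc, ← Real.exp_add]
  congr 1
  ring

lemma stirling_int (N : ℕ) (hN : 1 ≤ N) : F N ≤ Real.Gamma N := by
  have hNpos : (0:ℝ) < N := by exact_mod_cast hN
  have h1 : Real.sqrt π ≤ Stirling.stirlingSeq N := by
    obtain ⟨k, rfl⟩ := Nat.exists_eq_add_of_le hN
    have ht : Filter.Tendsto (fun n : ℕ => Stirling.stirlingSeq (n+1)) Filter.atTop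
        (nhds (Real.sqrt π)) :=
      Stirling.tendsto_stirlingSeq_sqrt_pi.comp (Filter.tendsto_add_atTop_nat 1)
    have := (Stirling.stirlingSeq'_antitone).le_of_tendsto ht k
    simpa [Nat.add_comm] using this
  rw [Stirling.stirlingSeq, le_div_iff₀ (by positivity)] at h1
  -- √π * (√(2N) * (N/e)^N) ≤ N!
  have h3 : (N:ℝ) * Real.Gamma N = (Nat.factorial N : ℝ) := by
    obtain ⟨k, rfl⟩ := Nat.exists_eq_add_of_le hN
    rw [← Real.Gamma_add_one (by positivity), Real.Gamma_nat_eq_factorial]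
  have heq : F N * N = Real.sqrt π * (Real.sqrt (2*N) * ((N:ℝ)/Real.exp 1)^N) := by
    rw [F, Real.sqrt_mul (by norm_num : (0:ℝ) ≤ 2) π, Real.sqrt_mul (by norm_num : (0:ℝ) ≤ 2) (N:ℝ)]
    have e1 : (N:ℝ) ^ ((N:ℝ) - 1/2) = (N:ℝ)^(N:ℕ) / Real.sqrt N := by
      rw [Real.sqrt_eq_rpow, ← Real.rpow_natCast (N:ℝ) N, ← Real.rpow_sub hNpos]
    have e2 : ((N:ℝ)/Real.exp 1)^N = (N:ℝ)^(N:ℕ) / Real.exp N := by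
      rw [div_pow, Real.exp_one_pow]
    rw [e1, e2, Real.exp_neg]
    have hsN : (0:ℝ) < Real.sqrt N := Real.sqrt_pos.2 hNpos
    field_simp
    linear_combination (-1) * Real.mul_self_sqrt hNpos.le
  calc F N = (F N * N) / N := by field_simp
  _ ≤ ((Nat.factorial N : ℝ)) / N := by
      gcongr
      rw [heq]; exact h1
  _ = Real.Gamma N := by rw [← h3]; field_simp

lemma F_step {x : ℝ} (hx : 0 < x) : F x * x ≤ F (x+1) := by
  have h1 : Real.log (1 + 1/x) = Real.log (x+1) - Real.log x := by
    rw [show 1 + 1/x = (x+1)/x by field_simp, Real.log_div (by linarith) (ne_of_gt hx)]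
  have hkey := key_log x hx
  rw [h1] at hkey
  rw [F_eq hx, F_eq (by linarith : (0:ℝ) < x + 1)]
  have hx' : x = Real.exp (Real.log x) := (Real.exp_log hx).symm
  calc Real.sqrt (2*π) * Real.exp ((x - 1/2) * Real.log x - x) * x
      = Real.sqrt (2*π) * Real.exp ((x - 1/2) * Real.log x - x + Real.log x) := by
        rw [Real.exp_add, ← mul_assoc, Real.exp_log hx]
  _ ≤ Real.sqrt (2*π) * Real.exp ((x + 1 - 1/2) * Real.log (x+1) - (x+1)) := by
        have : (x - 1/2) * Real.log x - x + Real.log x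
            ≤ (x + 1 - 1/2) * Real.log (x+1) - (x+1) := by nlinarith [hkey]
        have h2 := Real.exp_le_exp.2 this
        nlinarith [Real.sqrt_nonneg (2*π), h2, Real.exp_pos ((x - 1/2) * Real.log x - x + Real.log x)]

lemma F_descend (K : ℝ) : ∀ n : ℕ, ∀ x : ℝ, 0 < x →
    F (x + n) ≤ K * Real.Gamma (x + n) → F x ≤ K * Real.Gamma x := by
  intro n
  induction n with
  | zero => intro x hx h; simpa using h
  | succ n ih =>
    intro x hx h
    have h' : F (x+1) ≤ K * Real.Gamma (x+1) := by
      apply ih (x+1) (by linarith)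
      rw [show x + 1 + (n:ℝ) = x + ((n:ℕ)+1 : ℕ) by push_cast; ring]
      exact h
    rw [Real.Gamma_add_one (ne_of_gt hx)] at h'
    have := (F_step hx).trans h'
    rw [show K * (x * Real.Gamma x) = (K * Real.Gamma x) * x by ring] at this
    exact le_of_mul_le_mul_right this hx

lemma F_error (N : ℕ) (hN : 1 ≤ N) {s : ℝ} (hs0 : 0 ≤ s) (hs1 : s < 1) :
    F ((N:ℝ) + s) ≤ Real.exp (3/(2*N)) * Real.Gamma ((N:ℝ) + s) := by
  have hNpos : (0:ℝ) < N := by exact_mod_cast hN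
  have hy : (0:ℝ) < (N:ℝ) + s := by linarith
  have hw := wendel (x := (N:ℝ)+s) (a := 1-s) hy (by linarith) (by linarith)
  rw [show (N:ℝ)+s+(1-s) = (N:ℝ)+1 by ring, Real.Gamma_add_one (ne_of_gt hNpos)] at hw
  have hP : (0:ℝ) < ((N:ℝ)+s) ^ ((1:ℝ)-s) := Real.rpow_pos_of_pos hy _
  have hSt := stirling_int N hN
  have hL : Real.log ((N:ℝ)+s) - Real.log N ≤ s / N := by
    rw [← Real.log_div (ne_of_gt hy) (ne_of_gt hNpos)]
    have := Real.log_le_sub_one_of_pos (show (0:ℝ) < ((N:ℝ)+s)/N by positivity)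
    have heq : ((N:ℝ)+s)/N - 1 = s / N := by field_simp; ring
    linarith [heq ▸ this]
  have hL0 : 0 ≤ Real.log ((N:ℝ)+s) - Real.log N := by
    have := Real.log_le_log hNpos (show (N:ℝ) ≤ (N:ℝ)+s by linarith)
    linarith
  have hmain : F ((N:ℝ)+s) * ((N:ℝ)+s)^((1:ℝ)-s)
      ≤ Real.exp (3/(2*N)) * ((N:ℝ) * F N) := by
    rw [F_eq hy, F_eq hNpos, Real.rpow_def_of_pos hy]
    have hexp : ((N:ℝ)+s - 1/2) * Real.log ((N:ℝ)+s) - ((N:ℝ)+s)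
          + Real.log ((N:ℝ)+s) * (1-s)
        ≤ 3/(2*N) + Real.log N + (((N:ℝ) - 1/2) * Real.log N - N) := by
      have h1 : ((N:ℝ)+1/2) * (Real.log ((N:ℝ)+s) - Real.log N)
          ≤ ((N:ℝ)+1/2) * (s/N) := by
        apply mul_le_mul_of_nonneg_left hL (by linarith)
      have h2 : ((N:ℝ)+1/2) * (s/N) ≤ s + 3/(2*N) := by
        rw [show ((N:ℝ)+1/2) * (s/N) = s + s/(2*N) by field_simp]
        have : s/(2*(N:ℝ)) ≤ 3/(2*N) := by gcongr; linarith
        linarith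
      nlinarith [h1, h2]
    calc Real.sqrt (2*π) * Real.exp (((N:ℝ)+s - 1/2) * Real.log ((N:ℝ)+s) - ((N:ℝ)+s))
          * Real.exp (Real.log ((N:ℝ)+s) * (1-s))
        = Real.sqrt (2*π) * Real.exp ((((N:ℝ)+s - 1/2) * Real.log ((N:ℝ)+s) - ((N:ℝ)+s))
            + Real.log ((N:ℝ)+s) * (1-s)) := by rw [mul_assoc, ← Real.exp_add]
    _ ≤ Real.sqrt (2*π) * Real.exp (3/(2*N) + Real.log N + (((N:ℝ) - 1/2) * Real.log N - N)) := by
        have := Real.exp_le_exp.2 (by linarith [hexp] :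
          (((N:ℝ)+s - 1/2) * Real.log ((N:ℝ)+s) - ((N:ℝ)+s)) + Real.log ((N:ℝ)+s) * (1-s)
            ≤ 3/(2*N) + Real.log N + (((N:ℝ) - 1/2) * Real.log N - N))
        exact mul_le_mul_of_nonneg_left this (Real.sqrt_nonneg _)
    _ = Real.exp (3/(2*N)) * ((N:ℝ) * (Real.sqrt (2*π)
          * Real.exp (((N:ℝ) - 1/2) * Real.log N - N))) := by
        rw [Real.exp_add, Real.exp_add, Real.exp_log hNpos]; ring
  have step2 : F ((N:ℝ)+s) * ((N:ℝ)+s)^((1:ℝ)-s)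
      ≤ (Real.exp (3/(2*N)) * Real.Gamma ((N:ℝ)+s)) * ((N:ℝ)+s)^((1:ℝ)-s) := by
    calc F ((N:ℝ)+s) * ((N:ℝ)+s)^((1:ℝ)-s) ≤ Real.exp (3/(2*N)) * ((N:ℝ) * F N) := hmain
    _ ≤ Real.exp (3/(2*N)) * ((N:ℝ) * Real.Gamma N) := by
        apply mul_le_mul_of_nonneg_left (mul_le_mul_of_nonneg_left hSt hNpos.le)
          (Real.exp_pos _).le
    _ ≤ Real.exp (3/(2*N)) * (((N:ℝ)+s)^((1:ℝ)-s) * Real.Gamma ((N:ℝ)+s)) := by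
        apply mul_le_mul_of_nonneg_left hw (Real.exp_pos _).le
    _ = (Real.exp (3/(2*N)) * Real.Gamma ((N:ℝ)+s)) * ((N:ℝ)+s)^((1:ℝ)-s) := by ring
  exact le_of_mul_le_mul_right step2 hP

lemma stirling_real {x : ℝ} (hx : 1 ≤ x) : F x ≤ Real.Gamma x := by
  set m : ℕ := ⌊x⌋₊ with hm
  have hm1 : 1 ≤ m := Nat.le_floor (by exact_mod_cast hx)
  have hxpos : (0:ℝ) < x := by linarith
  have hs0 : 0 ≤ x - m := by
    have := Nat.floor_le hxpos.le
    linarith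
  have hs1 : x - m < 1 := by
    have := Nat.lt_floor_add_one x
    linarith
  have hbound : ∀ n : ℕ, F x ≤ Real.exp (3/(2*((m+n:ℕ):ℝ))) * Real.Gamma x := by
    intro n
    apply F_descend _ n x hxpos
    have harg : x + (n:ℝ) = ((m+n:ℕ):ℝ) + (x - m) := by push_cast; ring
    rw [harg]
    exact F_error (m+n) (le_trans hm1 (Nat.le_add_right _ _)) hs0 hs1
  have htend : Filter.Tendsto (fun n : ℕ => Real.exp (3/(2*((m+n:ℕ):ℝ))) * Real.Gamma x)
      Filter.atTop (nhds (Real.Gamma x)) := by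
    have h1 : Filter.Tendsto (fun n : ℕ => ((m+n:ℕ):ℝ)) Filter.atTop Filter.atTop := by
      apply Filter.tendsto_atTop_mono (fun n => by push_cast; linarith [Nat.cast_nonneg (α := ℝ) m] : ∀ n : ℕ, (n:ℝ) ≤ ((m+n:ℕ):ℝ))
      exact tendsto_natCast_atTop_atTop
    have h2 : Filter.Tendsto (fun n : ℕ => 3/(2*((m+n:ℕ):ℝ))) Filter.atTop (nhds 0) := by
      apply Filter.Tendsto.div_atTop tendsto_const_nhds
      exact Filter.Tendsto.const_mul_atTop (by norm_num) h1
    have h3 := (Real.continuous_exp.tendsto 0).comp h2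
    rw [Real.exp_zero] at h3
    have := h3.mul_const (Real.Gamma x)
    rwa [one_mul] at this
  exact ge_of_tendsto htend (Filter.Eventually.of_forall hbound)


/-- **Lower bound on the spherical moment constant via Gamma function estimates**
(key step in the proof of Proposition 7), together with the intermediate bounds
`Γ((p+1)/2) ≥ √(2π) ((p+1)/2)^{p/2} e^{−(p+1)/2}` and
`Γ(d/2)/Γ((d+p)/2) ≥ ((d+p)/2)^{−p/2}` used in its proof. -/
theorem gamma_spherical_moment_lower_bound
    {d : ℕ} (hd : 2 ≤ d) {p : ℝ} (hp : 1 ≤ p) :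
    (Real.sqrt (2 / Real.exp 1) * ((p + 1) / (Real.exp 1 * ((d : ℝ) + p))) ^ (p / 2) ≤
      Real.Gamma ((p + 1) / 2) * Real.Gamma ((d : ℝ) / 2) /
        (Real.sqrt Real.pi * Real.Gamma (((d : ℝ) + p) / 2))) ∧
    (Real.sqrt (2 * Real.pi) * ((p + 1) / 2) ^ (p / 2) * Real.exp (-(p + 1) / 2) ≤
      Real.Gamma ((p + 1) / 2)) ∧
    ((((d : ℝ) + p) / 2) ^ (-(p / 2)) ≤
      Real.Gamma ((d : ℝ) / 2) / Real.Gamma (((d : ℝ) + p) / 2)) := by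
  have hd2 : (2:ℝ) ≤ (d:ℝ) := by exact_mod_cast hd
  have hu : (0:ℝ) < (p+1)/2 := by linarith
  have hv : (0:ℝ) < ((d:ℝ)+p)/2 := by linarith
  have hx : (0:ℝ) < (d:ℝ)/2 := by linarith
  -- Part 2
  have part2 : Real.sqrt (2 * π) * ((p + 1) / 2) ^ (p / 2) * Real.exp (-(p + 1) / 2) ≤
      Real.Gamma ((p + 1) / 2) := by
    have h := stirling_real (x := (p+1)/2) (by linarith)
    rw [F, show (p+1)/2 - 1/2 = p/2 by ring, show -((p+1)/2) = -(p+1)/2 by ring] at h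
    exact h
  -- Part 3
  have part3 : (((d:ℝ) + p) / 2) ^ (-(p / 2)) ≤
      Real.Gamma ((d:ℝ) / 2) / Real.Gamma (((d:ℝ) + p) / 2) := by
    obtain ⟨n, hn⟩ := exists_nat_ge (p/2)
    have h := wendel_iter n ((d:ℝ)/2) (p/2) hx (by linarith) hn
    rw [show (d:ℝ)/2 + p/2 = ((d:ℝ)+p)/2 by ring] at h
    have hGdp : 0 < Real.Gamma (((d:ℝ)+p)/2) := Real.Gamma_pos_of_pos hv
    rw [Real.rpow_neg hv.le, inv_le_iff_one_le_mul₀' (Real.rpow_pos_of_pos hv _)]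
    rw [← mul_div_assoc, one_le_div hGdp]
    exact h
  refine ⟨?_, part2, part3⟩
  have hπ : (0:ℝ) < Real.sqrt π := Real.sqrt_pos.2 Real.pi_pos
  have hGp := Real.Gamma_pos_of_pos hu
  have hGd := Real.Gamma_pos_of_pos hx
  have hGdp := Real.Gamma_pos_of_pos hv
  have hE : (0:ℝ) < Real.exp 1 := Real.exp_pos 1
  have hdp : (0:ℝ) < (d:ℝ) + p := by linarith
  have hp1 : (0:ℝ) < p + 1 := by linarith
  have hw : (0:ℝ) < (p+1)/(Real.exp 1 * ((d:ℝ)+p)) := by positivity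
  have a1 : ((p+1)/(Real.exp 1 * ((d:ℝ)+p)))^(p/2)
      = Real.exp ((Real.log (p+1) - 1 - Real.log ((d:ℝ)+p)) * (p/2)) := by
    rw [Real.rpow_def_of_pos hw, Real.log_div (ne_of_gt hp1) (by positivity),
      Real.log_mul (ne_of_gt hE) (ne_of_gt hdp), Real.log_exp]
    ring_nf
  have a2 : ((p+1)/2)^(p/2) = Real.exp ((Real.log (p+1) - Real.log 2) * (p/2)) := by
    rw [Real.rpow_def_of_pos hu, Real.log_div (ne_of_gt hp1) two_ne_zero]
  have a3 : (((d:ℝ)+p)/2)^(-(p/2))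
      = Real.exp ((Real.log ((d:ℝ)+p) - Real.log 2) * (-(p/2))) := by
    rw [Real.rpow_def_of_pos hv, Real.log_div (ne_of_gt hdp) two_ne_zero]
  have a4 : Real.sqrt (2/Real.exp 1) = Real.sqrt 2 * Real.exp (-(1/2)) := by
    rw [show (2:ℝ)/Real.exp 1 = 2 * (Real.exp 1)⁻¹ by ring,
      Real.sqrt_mul (by norm_num : (0:ℝ) ≤ 2),
      show Real.sqrt (Real.exp 1)⁻¹ = Real.exp (-(1/2)) by
        rw [Real.sqrt_eq_rpow, Real.rpow_def_of_pos (by positivity), Real.log_inv, Real.log_exp]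
        norm_num]
  have a5 : Real.sqrt (2*π) = Real.sqrt 2 * Real.sqrt π :=
    Real.sqrt_mul (by norm_num : (0:ℝ) ≤ 2) _
  have a6 : Real.exp (-(p+1)/2) = Real.exp (-(1/2)) * Real.exp (-(p/2)) := by
    rw [← Real.exp_add]; congr 1; ring
  have hLeq : Real.sqrt (2/Real.exp 1) * ((p+1)/(Real.exp 1 * ((d:ℝ)+p)))^(p/2)
      = Real.sqrt (2*π) * ((p+1)/2)^(p/2) * Real.exp (-(p+1)/2)
        * (((d:ℝ)+p)/2)^(-(p/2)) / Real.sqrt π := by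
    have hLpos : (0:ℝ) < Real.sqrt (2/Real.exp 1) * ((p+1)/(Real.exp 1 * ((d:ℝ)+p)))^(p/2) := by
      positivity
    have hRpos : (0:ℝ) < Real.sqrt (2*π) * ((p+1)/2)^(p/2) * Real.exp (-(p+1)/2)
        * (((d:ℝ)+p)/2)^(-(p/2)) / Real.sqrt π := by positivity
    apply Real.log_injOn_pos (Set.mem_Ioi.mpr hLpos) (Set.mem_Ioi.mpr hRpos)
    rw [Real.log_mul (by positivity) (by positivity),
      Real.log_div (by positivity) (by positivity),
      Real.log_mul (by positivity) (by positivity),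
      Real.log_mul (by positivity) (by positivity),
      Real.log_mul (by positivity) (by positivity),
      Real.log_sqrt (by positivity), Real.log_sqrt (by positivity),
      Real.log_sqrt Real.pi_pos.le,
      Real.log_rpow hw, Real.log_rpow hu, Real.log_rpow hv, Real.log_exp,
      Real.log_div (ne_of_gt hp1) (by positivity),
      Real.log_mul (ne_of_gt hE) (ne_of_gt hdp), Real.log_exp,
      Real.log_div (by norm_num : (2:ℝ) ≠ 0) (by positivity), Real.log_exp,
      Real.log_div (ne_of_gt hp1) (by norm_num : (2:ℝ) ≠ 0),
      Real.log_div (ne_of_gt hdp) (by norm_num : (2:ℝ) ≠ 0),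
      Real.log_mul (by norm_num : (2:ℝ) ≠ 0) (ne_of_gt Real.pi_pos)]
    ring
  calc Real.sqrt (2/Real.exp 1) * ((p+1)/(Real.exp 1 * ((d:ℝ)+p)))^(p/2)
      = Real.sqrt (2*π) * ((p+1)/2)^(p/2) * Real.exp (-(p+1)/2)
        * (((d:ℝ)+p)/2)^(-(p/2)) / Real.sqrt π := hLeq
  _ ≤ Real.Gamma ((p+1)/2) * (Real.Gamma ((d:ℝ)/2) / Real.Gamma (((d:ℝ)+p)/2))
        / Real.sqrt π := by
      gcongr
  _ = Real.Gamma ((p+1)/2) * Real.Gamma ((d:ℝ)/2)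
        / (Real.sqrt π * Real.Gamma (((d:ℝ)+p)/2)) := by
      field_simp
end

section
/- Single-sample bounded-difference property of the empirical sliced Wasserstein distance (key step in the proof of Lemma 15): Let p ≥ 1, D > 0, d ≥ 1, and integers n, m ≥ 1. Let y_1,…,y_n, z_1,…,z_m ∈ ℝ^d with all norms at most D, and let y_i' ∈ ℝ^d with ‖y_i'‖ ≤ D for some index i. Let μ̂_n = (1/n)Σ_{j=1}^n δ_{y_j}, let μ̂_n' be the empirical measure obtained by replacing y_i with y_i', and let ν̂_m = (1/m)Σ_{j=1}^m δ_{z_j}. Then | SW_p^p(μ̂_n, ν̂_m) − SW_p^p(μ̂_n', ν̂_m) | ≤ (2D)^p / n; symmetrically, replacing one point z_j (staying in the ball of radius D) changes SW_p^p(μ̂_n, ν̂_m) by at most (2D)^p / m. -/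
open MeasureTheory Finset
open scoped ENNReal

noncomputable section AuxSW

namespace SWaux

variable {n m : ℕ}

/-- The transport polytope. -/
def matPoly (n m : ℕ) : Set (Fin n → Fin m → ℝ) :=
  {M | (∀ j k, 0 ≤ M j k) ∧ (∀ j, ∑ k, M j k = (n : ℝ)⁻¹) ∧ (∀ k, ∑ j, M j k = (m : ℝ)⁻¹)}

def matCost (p : ℝ) (a : Fin n → ℝ) (b : Fin m → ℝ) (M : Fin n → Fin m → ℝ) : ℝ :=
  ∑ j, ∑ k, M j k * |a j - b k| ^ p

def gFun (p : ℝ) (a : Fin n → ℝ) (b : Fin m → ℝ) : ℝ :=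
  sInf (matCost p a b '' matPoly n m)

lemma matPoly_nonempty (hn : 0 < n) (hm : 0 < m) : (matPoly n m).Nonempty := by
  refine ⟨fun _ _ => (n : ℝ)⁻¹ * (m : ℝ)⁻¹, fun j k => by positivity, fun j => ?_, fun k => ?_⟩
  · rw [Finset.sum_const, Finset.card_univ, Fintype.card_fin, nsmul_eq_mul]
    have : (m : ℝ) ≠ 0 := Nat.cast_ne_zero.mpr hm.ne'
    field_simp
  · rw [Finset.sum_const, Finset.card_univ, Fintype.card_fin, nsmul_eq_mul]
    have : (n : ℝ) ≠ 0 := Nat.cast_ne_zero.mpr hn.ne'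
    field_simp

lemma matCost_nonneg {p : ℝ} {a : Fin n → ℝ} {b : Fin m → ℝ} {M : Fin n → Fin m → ℝ}
    (hM : M ∈ matPoly n m) : 0 ≤ matCost p a b M :=
  Finset.sum_nonneg fun j _ => Finset.sum_nonneg fun k _ =>
    mul_nonneg (hM.1 j k) (Real.rpow_nonneg (abs_nonneg _) _)

lemma matCost_le {p D : ℝ} (hp : 0 ≤ p) (hD : 0 ≤ D) {a : Fin n → ℝ} {b : Fin m → ℝ}
    (ha : ∀ j, |a j| ≤ D) (hb : ∀ k, |b k| ≤ D) {M : Fin n → Fin m → ℝ}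
    (hM : M ∈ matPoly n m) (hn : 0 < n) : matCost p a b M ≤ (2 * D) ^ p := by
  have key : ∀ j k, |a j - b k| ^ p ≤ (2 * D) ^ p := by
    intro j k
    refine Real.rpow_le_rpow (abs_nonneg _) ?_ hp
    calc |a j - b k| ≤ |a j| + |b k| := abs_sub _ _
    _ ≤ 2 * D := by have := ha j; have := hb k; linarith
  calc matCost p a b M ≤ ∑ j, ∑ k, M j k * (2 * D) ^ p := by
        refine Finset.sum_le_sum fun j _ => Finset.sum_le_sum fun k _ =>
          mul_le_mul_of_nonneg_left (key j k) (hM.1 j k)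
  _ = ∑ j : Fin n, (n : ℝ)⁻¹ * (2 * D) ^ p := by
        refine Finset.sum_congr rfl fun j _ => ?_
        rw [← Finset.sum_mul, hM.2.1 j]
  _ = (2 * D) ^ p := by
        rw [Finset.sum_const, Finset.card_univ, Fintype.card_fin, nsmul_eq_mul]
        have : (n : ℝ) ≠ 0 := Nat.cast_ne_zero.mpr hn.ne'
        field_simp

end SWaux

namespace SWaux

lemma map_finset_sum {α β ι : Type*} [MeasurableSpace α] [MeasurableSpace β] {f : α → β}
    (hf : Measurable f) (s : Finset ι) (μ : ι → Measure α) :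
    (∑ i ∈ s, μ i).map f = ∑ i ∈ s, (μ i).map f := by
  classical
  induction s using Finset.cons_induction with
  | empty => simp
  | cons i s hi ih => rw [Finset.sum_cons, Finset.sum_cons, Measure.map_add _ _ hf, ih]

lemma integrable_dirac' {α : Type*} [MeasurableSpace α] [MeasurableSingletonClass α] (a : α)
    (f : α → ℝ) : Integrable f (Measure.dirac a) := by
  refine (integrable_const (f a)).congr ?_
  rw [Filter.EventuallyEq]
  simp [ae_dirac_eq]

lemma cont_cost (p : ℝ) (hp : 1 ≤ p) : Continuous (fun xy : ℝ × ℝ => dist xy.1 xy.2 ^ p) :=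
  (continuous_fst.dist continuous_snd).rpow_const (fun _ => Or.inr (by positivity))

/-- From a matrix in the transport polytope, build a coupling with the matching cost. -/
lemma exists_coupling (p : ℝ) (hp : 1 ≤ p) (hn : 0 < n) (hm : 0 < m)
    (a : Fin n → ℝ) (b : Fin m → ℝ) {M : Fin n → Fin m → ℝ} (hM : M ∈ matPoly n m) :
    ∃ γ ∈ couplings (empMeas a) (empMeas b),
      (∫ xy : ℝ × ℝ, dist xy.1 xy.2 ^ p ∂γ) = matCost p a b M := by
  classical
  set γ : Measure (ℝ × ℝ) :=
    ∑ j : Fin n, ∑ k : Fin m, ENNReal.ofReal (M j k) • Measure.dirac ((a j, b k)) with hγdef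
  have hofn : ENNReal.ofReal ((n : ℝ)⁻¹) = (n : ℝ≥0∞)⁻¹ := by
    rw [ENNReal.ofReal_inv_of_pos (by exact_mod_cast hn), ENNReal.ofReal_natCast]
  have hofm : ENNReal.ofReal ((m : ℝ)⁻¹) = (m : ℝ≥0∞)⁻¹ := by
    rw [ENNReal.ofReal_inv_of_pos (by exact_mod_cast hm), ENNReal.ofReal_natCast]
  have hfst : γ.map Prod.fst = empMeas a := by
    rw [hγdef, map_finset_sum measurable_fst]
    have : ∀ j : Fin n, (∑ k : Fin m, ENNReal.ofReal (M j k) • Measure.dirac ((a j, b k))).map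
        Prod.fst = (n : ℝ≥0∞)⁻¹ • Measure.dirac (a j) := by
      intro j
      rw [map_finset_sum measurable_fst]
      have : ∀ k : Fin m, (ENNReal.ofReal (M j k) • Measure.dirac ((a j, b k))).map Prod.fst
          = ENNReal.ofReal (M j k) • Measure.dirac (a j) := by
        intro k
        rw [Measure.map_smul, Measure.map_dirac' measurable_fst]
      rw [Finset.sum_congr rfl fun k _ => this k, ← Finset.sum_smul,
        ← ENNReal.ofReal_sum_of_nonneg (fun k _ => hM.1 j k), hM.2.1 j, hofn]
    rw [Finset.sum_congr rfl fun j _ => this j, empMeas, Finset.smul_sum]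
    simp
  have hsnd : γ.map Prod.snd = empMeas b := by
    rw [hγdef, map_finset_sum measurable_snd]
    have : ∀ j : Fin n, (∑ k : Fin m, ENNReal.ofReal (M j k) • Measure.dirac ((a j, b k))).map
        Prod.snd = ∑ k : Fin m, ENNReal.ofReal (M j k) • Measure.dirac (b k) := by
      intro j
      rw [map_finset_sum measurable_snd]
      refine Finset.sum_congr rfl fun k _ => ?_
      rw [Measure.map_smul, Measure.map_dirac' measurable_snd]
    rw [Finset.sum_congr rfl fun j _ => this j, Finset.sum_comm]
    have : ∀ k : Fin m, ∑ j : Fin n, ENNReal.ofReal (M j k) • Measure.dirac (b k)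
        = (m : ℝ≥0∞)⁻¹ • Measure.dirac (b k) := by
      intro k
      rw [← Finset.sum_smul, ← ENNReal.ofReal_sum_of_nonneg (fun j _ => hM.1 j k),
        hM.2.2 k, hofm]
    rw [Finset.sum_congr rfl fun k _ => this k, empMeas, Finset.smul_sum]
    simp
  have hprob : IsProbabilityMeasure γ := by
    constructor
    have : γ Set.univ = γ (Prod.fst ⁻¹' Set.univ) := by simp
    rw [this, ← Measure.map_apply measurable_fst MeasurableSet.univ, hfst]
    rw [empMeas]
    simp only [Measure.smul_apply, Measure.coe_finset_sum, Finset.sum_apply, smul_eq_mul]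
    rw [Finset.sum_congr rfl (fun j _ => (by simp : Measure.dirac (a j) Set.univ = 1))]
    simp only [Finset.sum_const, Finset.card_univ, Fintype.card_fin, nsmul_eq_mul, mul_one]
    exact ENNReal.inv_mul_cancel (by exact_mod_cast hn.ne') (ENNReal.natCast_ne_top _)
  have hIntjk : ∀ (j : Fin n) (k : Fin m),
      Integrable (fun xy : ℝ × ℝ => dist xy.1 xy.2 ^ p)
        (ENNReal.ofReal (M j k) • Measure.dirac ((a j, b k))) := fun j k =>
    (integrable_dirac' _ _).smul_measure ENNReal.ofReal_ne_top
  have hint : (∫ xy : ℝ × ℝ, dist xy.1 xy.2 ^ p ∂γ) = matCost p a b M := by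
    rw [hγdef, integral_finset_sum_measure (fun j _ => (integrable_finset_sum_measure).mpr
      (fun k _ => hIntjk j k))]
    refine Finset.sum_congr rfl fun j _ => ?_
    rw [integral_finset_sum_measure (fun k _ => hIntjk j k)]
    refine Finset.sum_congr rfl fun k _ => ?_
    rw [integral_smul_measure, integral_dirac, ENNReal.toReal_ofReal (hM.1 j k)]
    simp [Real.dist_eq]
  exact ⟨γ, ⟨hprob, hfst, hsnd⟩, hint⟩

end SWaux

namespace SWaux

lemma empMeas_singleton (v : Fin n → ℝ) (s : ℝ) :
    empMeas v {s} = (n : ℝ≥0∞)⁻¹ * (univ.filter (fun j => v j = s)).card := by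
  classical
  rw [empMeas]
  simp only [Measure.smul_apply, Measure.coe_finset_sum, Finset.sum_apply, smul_eq_mul,
    Fintype.card_fin]
  congr 1
  rw [Finset.sum_congr rfl (fun j _ => Measure.dirac_apply' (v j) (measurableSet_singleton s))]
  simp only [Set.indicator_apply, Set.mem_singleton_iff, Pi.one_apply]
  rw [Finset.sum_boole]

/-- From a coupling, extract a matrix in the polytope with the matching cost. -/
lemma exists_matrix (p : ℝ) (hp : 1 ≤ p) (hn : 0 < n) (hm : 0 < m)
    (a : Fin n → ℝ) (b : Fin m → ℝ) {γ : Measure (ℝ × ℝ)}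
    (hγ : γ ∈ couplings (empMeas a) (empMeas b)) :
    ∃ M ∈ matPoly n m, matCost p a b M = ∫ xy : ℝ × ℝ, dist xy.1 xy.2 ^ p ∂γ := by
  classical
  obtain ⟨hprob, hfst, hsnd⟩ := hγ
  set f : ℝ × ℝ → ℝ := fun xy => dist xy.1 xy.2 ^ p with hfdef
  set S : Finset ℝ := univ.image a with hSdef
  set T : Finset ℝ := univ.image b with hTdef
  have hSne : S.Nonempty := by
    haveI : Nonempty (Fin n) := ⟨⟨0, hn⟩⟩
    exact Finset.univ_nonempty.image a
  have hTne : T.Nonempty := by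
    haveI : Nonempty (Fin m) := ⟨⟨0, hm⟩⟩
    exact Finset.univ_nonempty.image b
  -- the coupling is null outside S ×ˢ T
  have hS0 : γ ((↑S)ᶜ ×ˢ (Set.univ : Set ℝ)) = 0 := by
    have h1 : ((↑S)ᶜ ×ˢ (Set.univ : Set ℝ)) = Prod.fst ⁻¹' ((S : Set ℝ))ᶜ := by
      ext x; simp
    rw [h1, ← Measure.map_apply measurable_fst ((S.finite_toSet.measurableSet).compl), hfst, empMeas]
    simp only [Measure.smul_apply, Measure.coe_finset_sum, Finset.sum_apply, smul_eq_mul]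
    have : ∀ j : Fin n, Measure.dirac (a j) ((↑S)ᶜ) = 0 := by
      intro j
      rw [Measure.dirac_apply' _ ((S.finite_toSet.measurableSet).compl)]
      simp [hSdef, Set.indicator_apply]
    simp [this]
  have hT0 : γ ((Set.univ : Set ℝ) ×ˢ (↑T)ᶜ) = 0 := by
    have h1 : ((Set.univ : Set ℝ) ×ˢ (↑T)ᶜ) = Prod.snd ⁻¹' ((T : Set ℝ))ᶜ := by
      ext x; simp
    rw [h1, ← Measure.map_apply measurable_snd ((T.finite_toSet.measurableSet).compl), hsnd, empMeas]
    simp only [Measure.smul_apply, Measure.coe_finset_sum, Finset.sum_apply, smul_eq_mul]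
    have : ∀ k : Fin m, Measure.dirac (b k) ((↑T)ᶜ) = 0 := by
      intro k
      rw [Measure.dirac_apply' _ ((T.finite_toSet.measurableSet).compl)]
      simp [hTdef, Set.indicator_apply]
    simp [this]
  have hU0 : γ ((↑(S ×ˢ T) : Set (ℝ × ℝ))ᶜ) = 0 := by
    refine measure_mono_null ?_ (measure_union_null hS0 hT0)
    intro x hx
    rw [Set.mem_compl_iff, Finset.coe_product, Set.mem_prod, not_and_or] at hx
    rcases hx with hx | hx
    · exact Or.inl ⟨hx, trivial⟩
    · exact Or.inr ⟨trivial, hx⟩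
  have hres : γ.restrict ↑(S ×ˢ T) = γ :=
    Measure.restrict_eq_self_of_ae_mem (mem_ae_iff.mpr hU0)
  have hf_nonneg : ∀ x, 0 ≤ f x := fun x => Real.rpow_nonneg dist_nonneg p
  have hUne : (S ×ˢ T).Nonempty := hSne.product hTne
  set C : ℝ := (S ×ˢ T).sup' hUne f with hCdef
  have haeU : ∀ᵐ x ∂γ, x ∈ (↑(S ×ˢ T) : Set (ℝ × ℝ)) := mem_ae_iff.mpr hU0
  have hbound : ∀ᵐ x ∂γ, ‖f x‖ ≤ C := by
    filter_upwards [haeU] with x hx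
    rw [Real.norm_eq_abs, abs_of_nonneg (hf_nonneg x)]
    exact Finset.le_sup' f (Finset.mem_coe.mp hx)
  have hInt : Integrable f γ :=
    Integrable.mono' (integrable_const C) (cont_cost p hp).aestronglyMeasurable hbound
  have hint_eq : (∫ x, f x ∂γ) = ∑ u ∈ S ×ˢ T, (γ {u}).toReal • f u := by
    conv_lhs => rw [← hres]
    exact integral_finset (S ×ˢ T) (by rw [IntegrableOn, hres]; exact hInt)
  -- fiber counts
  set cA : ℝ → ℕ := fun s => (univ.filter (fun j => a j = s)).card with hcAdef
  set cB : ℝ → ℕ := fun t => (univ.filter (fun k => b k = t)).card with hcBdef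
  have hcApos : ∀ j, 0 < cA (a j) := fun j => Finset.card_pos.mpr ⟨j, by simp⟩
  have hcBpos : ∀ k, 0 < cB (b k) := fun k => Finset.card_pos.mpr ⟨k, by simp⟩
  have hcApos' : ∀ s ∈ S, 0 < cA s := by
    intro s hs; obtain ⟨j, _, rfl⟩ := Finset.mem_image.mp hs; exact hcApos j
  have hcBpos' : ∀ t ∈ T, 0 < cB t := by
    intro t ht; obtain ⟨k, _, rfl⟩ := Finset.mem_image.mp ht; exact hcBpos k
  have hntop : ∀ u : ℝ × ℝ, γ {u} ≠ ∞ := fun u => measure_ne_top γ _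
  -- row and column masses
  have hrow : ∀ s : ℝ, ∑ t ∈ T, (γ {(s, t)}).toReal = (cA s : ℝ) / n := by
    intro s
    have hdisj : (↑T : Set ℝ).PairwiseDisjoint (fun t => ({(s, t)} : Set (ℝ × ℝ))) := by
      intro t1 _ t2 _ hne
      rw [Function.onFun, Set.disjoint_singleton]
      intro h
      exact hne (congrArg Prod.snd h)
    have h1 : γ (⋃ t ∈ T, ({(s, t)} : Set (ℝ × ℝ))) = ∑ t ∈ T, γ {(s, t)} :=
      measure_biUnion_finset hdisj (fun t _ => measurableSet_singleton _)
    have h2 : (⋃ t ∈ T, ({(s, t)} : Set (ℝ × ℝ))) = {s} ×ˢ (↑T : Set ℝ) := by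
      ext x
      simp only [Set.mem_iUnion, Set.mem_singleton_iff, Set.mem_prod, Finset.mem_coe]
      constructor
      · rintro ⟨t, ht, rfl⟩; exact ⟨rfl, ht⟩
      · rintro ⟨hx1, hx2⟩; exact ⟨x.2, hx2, by rw [← hx1]⟩
    have h3 : γ ({s} ×ˢ (↑T : Set ℝ)) = γ ({s} ×ˢ (Set.univ : Set ℝ)) := by
      refine le_antisymm (measure_mono (Set.prod_mono_right (Set.subset_univ _))) ?_
      calc γ ({s} ×ˢ (Set.univ : Set ℝ))
          ≤ γ ({s} ×ˢ (↑T : Set ℝ) ∪ (Set.univ : Set ℝ) ×ˢ ((T : Set ℝ))ᶜ) := by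
            refine measure_mono ?_
            rintro ⟨x1, x2⟩ ⟨hx1, -⟩
            by_cases hx2 : x2 ∈ (T : Set ℝ)
            · exact Or.inl ⟨hx1, hx2⟩
            · exact Or.inr ⟨trivial, hx2⟩
      _ ≤ γ ({s} ×ˢ (↑T : Set ℝ)) + γ ((Set.univ : Set ℝ) ×ˢ ((T : Set ℝ))ᶜ) :=
            measure_union_le _ _
      _ = γ ({s} ×ˢ (↑T : Set ℝ)) := by rw [hT0, add_zero]
    have h4 : ({s} ×ˢ (Set.univ : Set ℝ)) = Prod.fst ⁻¹' {s} := by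
      ext ⟨x1, x2⟩; simp [eq_comm]
    have h5 : γ ({s} ×ˢ (Set.univ : Set ℝ)) = empMeas a {s} := by
      rw [h4, ← Measure.map_apply measurable_fst (measurableSet_singleton s), hfst]
    have h6 : ∑ t ∈ T, γ {(s, t)} = (n : ℝ≥0∞)⁻¹ * (cA s : ℝ≥0∞) := by
      rw [← h1, h2, h3, h5, empMeas_singleton]
    rw [← ENNReal.toReal_sum (fun t _ => hntop _), h6, ENNReal.toReal_mul, ENNReal.toReal_inv,
      ENNReal.toReal_natCast, ENNReal.toReal_natCast]
    ring
  have hcol : ∀ t : ℝ, ∑ s ∈ S, (γ {(s, t)}).toReal = (cB t : ℝ) / m := by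
    intro t
    have hdisj : (↑S : Set ℝ).PairwiseDisjoint (fun s => ({(s, t)} : Set (ℝ × ℝ))) := by
      intro s1 _ s2 _ hne
      rw [Function.onFun, Set.disjoint_singleton]
      intro h
      exact hne (congrArg Prod.fst h)
    have h1 : γ (⋃ s ∈ S, ({(s, t)} : Set (ℝ × ℝ))) = ∑ s ∈ S, γ {(s, t)} :=
      measure_biUnion_finset hdisj (fun s _ => measurableSet_singleton _)
    have h2 : (⋃ s ∈ S, ({(s, t)} : Set (ℝ × ℝ))) = (↑S : Set ℝ) ×ˢ {t} := by
      ext x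
      simp only [Set.mem_iUnion, Set.mem_singleton_iff, Set.mem_prod, Finset.mem_coe]
      constructor
      · rintro ⟨s, hs, rfl⟩; exact ⟨hs, rfl⟩
      · rintro ⟨hx1, hx2⟩; exact ⟨x.1, hx1, by rw [← hx2]⟩
    have h3 : γ ((↑S : Set ℝ) ×ˢ {t}) = γ ((Set.univ : Set ℝ) ×ˢ {t}) := by
      refine le_antisymm (measure_mono (Set.prod_mono_left (Set.subset_univ _))) ?_
      calc γ ((Set.univ : Set ℝ) ×ˢ ({t} : Set ℝ))
          ≤ γ ((↑S : Set ℝ) ×ˢ ({t} : Set ℝ) ∪ ((S : Set ℝ))ᶜ ×ˢ (Set.univ : Set ℝ)) := by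
            refine measure_mono ?_
            rintro ⟨x1, x2⟩ ⟨-, hx2⟩
            by_cases hx1 : x1 ∈ (S : Set ℝ)
            · exact Or.inl ⟨hx1, hx2⟩
            · exact Or.inr ⟨hx1, trivial⟩
      _ ≤ γ ((↑S : Set ℝ) ×ˢ ({t} : Set ℝ)) + γ (((S : Set ℝ))ᶜ ×ˢ (Set.univ : Set ℝ)) :=
            measure_union_le _ _
      _ = γ ((↑S : Set ℝ) ×ˢ ({t} : Set ℝ)) := by rw [hS0, add_zero]
    have h4 : ((Set.univ : Set ℝ) ×ˢ ({t} : Set ℝ)) = Prod.snd ⁻¹' {t} := by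
      ext ⟨x1, x2⟩; simp [eq_comm]
    have h5 : γ ((Set.univ : Set ℝ) ×ˢ ({t} : Set ℝ)) = empMeas b {t} := by
      rw [h4, ← Measure.map_apply measurable_snd (measurableSet_singleton t), hsnd]
    have h6 : ∑ s ∈ S, γ {(s, t)} = (m : ℝ≥0∞)⁻¹ * (cB t : ℝ≥0∞) := by
      rw [← h1, h2, h3, h5, empMeas_singleton]
    rw [← ENNReal.toReal_sum (fun s _ => hntop _), h6, ENNReal.toReal_mul, ENNReal.toReal_inv,
      ENNReal.toReal_natCast, ENNReal.toReal_natCast]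
    ring
  -- the matrix
  set G : ℝ → ℝ → ℝ := fun s t => (γ {(s, t)}).toReal / ((cA s : ℝ) * (cB t : ℝ)) with hGdef
  refine ⟨fun j k => G (a j) (b k), ⟨fun j k => div_nonneg ENNReal.toReal_nonneg (by positivity),
    fun j => ?_, fun k => ?_⟩, ?_⟩
  · -- row sums
    rw [Finset.sum_comp (fun t => G (a j) t) b]
    have hstep : ∀ t ∈ T, (#{k ∈ univ | b k = t}) • G (a j) t
        = (γ {(a j, t)}).toReal / (cA (a j) : ℝ) := by
      intro t ht
      have hcB : (cB t : ℝ) ≠ 0 := Nat.cast_ne_zero.mpr (hcBpos' t ht).ne'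
      have hcA : (cA (a j) : ℝ) ≠ 0 := Nat.cast_ne_zero.mpr (hcApos j).ne'
      rw [nsmul_eq_mul, hGdef]
      show (cB t : ℝ) * ((γ {(a j, t)}).toReal / ((cA (a j) : ℝ) * (cB t : ℝ)))
        = (γ {(a j, t)}).toReal / (cA (a j) : ℝ)
      field_simp
    rw [Finset.sum_congr rfl hstep, ← Finset.sum_div, hrow (a j)]
    have hcA : (cA (a j) : ℝ) ≠ 0 := Nat.cast_ne_zero.mpr (hcApos j).ne'
    have hn' : (n : ℝ) ≠ 0 := Nat.cast_ne_zero.mpr hn.ne'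
    field_simp
  · -- column sums
    rw [Finset.sum_comp (fun s => G s (b k)) a]
    have hstep : ∀ s ∈ S, (#{j ∈ univ | a j = s}) • G s (b k)
        = (γ {(s, b k)}).toReal / (cB (b k) : ℝ) := by
      intro s hs
      have hcA : (cA s : ℝ) ≠ 0 := Nat.cast_ne_zero.mpr (hcApos' s hs).ne'
      have hcB : (cB (b k) : ℝ) ≠ 0 := Nat.cast_ne_zero.mpr (hcBpos k).ne'
      rw [nsmul_eq_mul, hGdef]
      show (cA s : ℝ) * ((γ {(s, b k)}).toReal / ((cA s : ℝ) * (cB (b k) : ℝ)))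
        = (γ {(s, b k)}).toReal / (cB (b k) : ℝ)
      field_simp
    rw [Finset.sum_congr rfl hstep, ← Finset.sum_div, hcol (b k)]
    have hcB : (cB (b k) : ℝ) ≠ 0 := Nat.cast_ne_zero.mpr (hcBpos k).ne'
    have hm' : (m : ℝ) ≠ 0 := Nat.cast_ne_zero.mpr hm.ne'
    field_simp
  · -- cost
    rw [hint_eq, matCost]
    have hinner : ∀ s : ℝ, ∑ k, G s (b k) * |s - b k| ^ p
        = ∑ t ∈ T, (γ {(s, t)}).toReal / (cA s : ℝ) * |s - t| ^ p := by
      intro s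
      rw [Finset.sum_comp (fun t => G s t * |s - t| ^ p) b]
      refine Finset.sum_congr rfl fun t ht => ?_
      have hcB : (cB t : ℝ) ≠ 0 := Nat.cast_ne_zero.mpr (hcBpos' t ht).ne'
      rw [nsmul_eq_mul, hGdef]
      show (cB t : ℝ) * ((γ {(s, t)}).toReal / ((cA s : ℝ) * (cB t : ℝ)) * |s - t| ^ p)
        = (γ {(s, t)}).toReal / (cA s : ℝ) * |s - t| ^ p
      by_cases hcA : (cA s : ℝ) = 0
      · rw [hcA]; simp
      · field_simp
    rw [Finset.sum_congr rfl (fun j (_ : j ∈ univ) => hinner (a j)),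
      Finset.sum_comp (fun s => ∑ t ∈ T, (γ {(s, t)}).toReal / (cA s : ℝ) * |s - t| ^ p) a,
      Finset.sum_product]
    refine Finset.sum_congr rfl fun s hs => ?_
    rw [nsmul_eq_mul, Finset.mul_sum]
    refine Finset.sum_congr rfl fun t ht => ?_
    have hcA : (cA s : ℝ) ≠ 0 := Nat.cast_ne_zero.mpr (hcApos' s hs).ne'
    rw [smul_eq_mul, hfdef]
    show (cA s : ℝ) * ((γ {(s, t)}).toReal / (cA s : ℝ) * |s - t| ^ p)
      = (γ {(s, t)}).toReal * dist s t ^ p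
    rw [Real.dist_eq]
    field_simp

end SWaux

namespace SWaux

lemma couplings_bddBelow (P Q : Measure ℝ) (p : ℝ) :
    BddBelow ((fun γ : Measure (ℝ × ℝ) => ∫ xy, dist xy.1 xy.2 ^ p ∂γ) '' couplings P Q) := by
  refine ⟨0, ?_⟩
  rintro x ⟨γ, -, rfl⟩
  exact integral_nonneg fun xy => Real.rpow_nonneg dist_nonneg p

lemma matCost_bddBelow (p : ℝ) (a : Fin n → ℝ) (b : Fin m → ℝ) :
    BddBelow (matCost p a b '' matPoly n m) := by
  refine ⟨0, ?_⟩
  rintro x ⟨M, hM, rfl⟩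
  exact matCost_nonneg hM

/-- The `p`-Wasserstein distance between empirical measures equals the finite-dimensional
linear program over the transport polytope. -/
lemma WpPow_emp_eq (p : ℝ) (hp : 1 ≤ p) (hn : 0 < n) (hm : 0 < m)
    (a : Fin n → ℝ) (b : Fin m → ℝ) :
    WpPow p (empMeas a) (empMeas b) = gFun p a b := by
  obtain ⟨M₀, hM₀⟩ := matPoly_nonempty hn hm
  obtain ⟨γ₀, hγ₀, hγ₀c⟩ := exists_coupling p hp hn hm a b hM₀
  refine le_antisymm ?_ ?_
  · refine le_csInf ⟨_, Set.mem_image_of_mem _ hM₀⟩ ?_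
    rintro x ⟨M, hM, rfl⟩
    obtain ⟨γ, hγ, hγc⟩ := exists_coupling p hp hn hm a b hM
    exact csInf_le (couplings_bddBelow _ _ p) ⟨γ, hγ, hγc⟩
  · refine le_csInf ⟨_, Set.mem_image_of_mem _ hγ₀⟩ ?_
    rintro x ⟨γ, hγ, rfl⟩
    obtain ⟨M, hM, hMc⟩ := exists_matrix p hp hn hm a b hγ
    exact le_of_le_of_eq (csInf_le (matCost_bddBelow p a b) (Set.mem_image_of_mem _ hM)) hMc

lemma rpow_diff_bound {p D : ℝ} (hp : 0 ≤ p) (hD : 0 ≤ D) {u v w : ℝ}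
    (hu : |u| ≤ D) (hv : |v| ≤ D) (hw : |w| ≤ D) :
    |(|u - w| ^ p) - (|v - w| ^ p)| ≤ (2 * D) ^ p := by
  have key : ∀ x y : ℝ, |x| ≤ D → |y| ≤ D → |x - y| ^ p ≤ (2 * D) ^ p := by
    intro x y hx hy
    refine Real.rpow_le_rpow (abs_nonneg _) ?_ hp
    calc |x - y| ≤ |x| + |y| := abs_sub _ _
    _ ≤ 2 * D := by linarith
  rw [abs_le]
  constructor
  · have h1 := key v w hv hw
    have h2 : (0:ℝ) ≤ |u - w| ^ p := Real.rpow_nonneg (abs_nonneg _) p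
    linarith
  · have h1 := key u w hu hw
    have h2 : (0:ℝ) ≤ |v - w| ^ p := Real.rpow_nonneg (abs_nonneg _) p
    linarith

lemma matCost_update_left {p D : ℝ} (hp : 0 ≤ p) (hD : 0 ≤ D) (hn : 0 < n)
    {a : Fin n → ℝ} {b : Fin m → ℝ} (ha : ∀ j, |a j| ≤ D) (hb : ∀ k, |b k| ≤ D)
    (i : Fin n) {ai' : ℝ} (hai' : |ai'| ≤ D) {M : Fin n → Fin m → ℝ} (hM : M ∈ matPoly n m) :
    |matCost p a b M - matCost p (Function.update a i ai') b M| ≤ (2 * D) ^ p / n := by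
  classical
  set a' := Function.update a i ai' with ha'def
  have ha' : ∀ j, |a' j| ≤ D := by
    intro j
    by_cases h : j = i
    · subst h; simpa [ha'def] using hai'
    · simpa [ha'def, Function.update_of_ne h] using ha j
  have hdiff : matCost p a b M - matCost p a' b M
      = ∑ k, M i k * (|a i - b k| ^ p - |a' i - b k| ^ p) := by
    rw [matCost, matCost, ← Finset.sum_sub_distrib]
    rw [Finset.sum_eq_single i]
    · rw [← Finset.sum_sub_distrib]
      refine Finset.sum_congr rfl fun k _ => ?_
      ring
    · intro j _ hj
      have : a' j = a j := Function.update_of_ne hj _ _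
      rw [this, sub_self]
    · intro h; exact absurd (Finset.mem_univ i) h
  rw [hdiff]
  calc |∑ k, M i k * (|a i - b k| ^ p - |a' i - b k| ^ p)|
      ≤ ∑ k, |M i k * (|a i - b k| ^ p - |a' i - b k| ^ p)| := Finset.abs_sum_le_sum_abs _ _
  _ ≤ ∑ k, M i k * (2 * D) ^ p := by
      refine Finset.sum_le_sum fun k _ => ?_
      rw [abs_mul, abs_of_nonneg (hM.1 i k)]
      exact mul_le_mul_of_nonneg_left (rpow_diff_bound hp hD (ha i) (ha' i) (hb k)) (hM.1 i k)
  _ = (2 * D) ^ p / n := by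
      rw [← Finset.sum_mul, hM.2.1 i, inv_mul_eq_div]

lemma matCost_update_right {p D : ℝ} (hp : 0 ≤ p) (hD : 0 ≤ D) (hm : 0 < m)
    {a : Fin n → ℝ} {b : Fin m → ℝ} (ha : ∀ j, |a j| ≤ D) (hb : ∀ k, |b k| ≤ D)
    (k0 : Fin m) {bk' : ℝ} (hbk' : |bk'| ≤ D) {M : Fin n → Fin m → ℝ} (hM : M ∈ matPoly n m) :
    |matCost p a b M - matCost p a (Function.update b k0 bk') M| ≤ (2 * D) ^ p / m := by
  classical
  set b' := Function.update b k0 bk' with hb'def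
  have hb' : ∀ k, |b' k| ≤ D := by
    intro k
    by_cases h : k = k0
    · subst h; simpa [hb'def] using hbk'
    · simpa [hb'def, Function.update_of_ne h] using hb k
  have hdiff : matCost p a b M - matCost p a b' M
      = ∑ j, M j k0 * (|a j - b k0| ^ p - |a j - b' k0| ^ p) := by
    rw [matCost, matCost, Finset.sum_comm (f := fun j k => M j k * |a j - b k| ^ p),
      Finset.sum_comm (f := fun j k => M j k * |a j - b' k| ^ p), ← Finset.sum_sub_distrib]
    rw [Finset.sum_eq_single k0]
    · rw [← Finset.sum_sub_distrib]
      refine Finset.sum_congr rfl fun j _ => ?_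
      ring
    · intro k _ hk
      have : b' k = b k := Function.update_of_ne hk _ _
      rw [this, sub_self]
    · intro h; exact absurd (Finset.mem_univ k0) h
  rw [hdiff]
  calc |∑ j, M j k0 * (|a j - b k0| ^ p - |a j - b' k0| ^ p)|
      ≤ ∑ j, |M j k0 * (|a j - b k0| ^ p - |a j - b' k0| ^ p)| := Finset.abs_sum_le_sum_abs _ _
  _ ≤ ∑ j, M j k0 * (2 * D) ^ p := by
      refine Finset.sum_le_sum fun j _ => ?_
      rw [abs_mul, abs_of_nonneg (hM.1 j k0)]
      have h1 : |(|a j - b k0| ^ p) - (|a j - b' k0| ^ p)| ≤ (2 * D) ^ p := by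
        have := rpow_diff_bound (u := b k0) (v := b' k0) (w := a j) hp hD (hb k0) (hb' k0) (ha j)
        simpa [abs_sub_comm] using this
      exact mul_le_mul_of_nonneg_left h1 (hM.1 j k0)
  _ = (2 * D) ^ p / m := by
      rw [← Finset.sum_mul, hM.2.2 k0, inv_mul_eq_div]

lemma gFun_diff_le {p c : ℝ} {a a' : Fin n → ℝ} {b b' : Fin m → ℝ} (hn : 0 < n) (hm : 0 < m)
    (h : ∀ M ∈ matPoly n m, |matCost p a b M - matCost p a' b' M| ≤ c) :
    |gFun p a b - gFun p a' b'| ≤ c := by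
  obtain ⟨M₀, hM₀⟩ := matPoly_nonempty hn hm
  have h1 : gFun p a b - c ≤ gFun p a' b' := by
    refine le_csInf ⟨_, Set.mem_image_of_mem _ hM₀⟩ ?_
    rintro x ⟨M, hM, rfl⟩
    have h2 : gFun p a b ≤ matCost p a b M :=
      csInf_le (matCost_bddBelow p a b) (Set.mem_image_of_mem _ hM)
    have h3 := (abs_le.mp (h M hM)).2
    linarith
  have h2 : gFun p a' b' - c ≤ gFun p a b := by
    refine le_csInf ⟨_, Set.mem_image_of_mem _ hM₀⟩ ?_
    rintro x ⟨M, hM, rfl⟩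
    have h2 : gFun p a' b' ≤ matCost p a' b' M :=
      csInf_le (matCost_bddBelow p a' b') (Set.mem_image_of_mem _ hM)
    have h3 := (abs_le.mp (h M hM)).1
    linarith
  rw [abs_le]
  constructor <;> linarith

lemma gFun_nonneg (p : ℝ) (hn : 0 < n) (hm : 0 < m) (a : Fin n → ℝ) (b : Fin m → ℝ) :
    0 ≤ gFun p a b := by
  obtain ⟨M₀, hM₀⟩ := matPoly_nonempty hn hm
  exact le_csInf ⟨_, Set.mem_image_of_mem _ hM₀⟩ (by rintro x ⟨M, hM, rfl⟩; exact matCost_nonneg hM)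

lemma gFun_le {p D : ℝ} (hp : 0 ≤ p) (hD : 0 ≤ D) (hn : 0 < n) (hm : 0 < m)
    {a : Fin n → ℝ} {b : Fin m → ℝ} (ha : ∀ j, |a j| ≤ D) (hb : ∀ k, |b k| ≤ D) :
    gFun p a b ≤ (2 * D) ^ p := by
  obtain ⟨M₀, hM₀⟩ := matPoly_nonempty hn hm
  exact le_trans (csInf_le (matCost_bddBelow p a b) (Set.mem_image_of_mem _ hM₀))
    (matCost_le hp hD ha hb hM₀ hn)

end SWaux

namespace SWaux

lemma csInf_eq_of_dense_sub {A B : Set ℝ} (hAB : A ⊆ B) (hBA : B ⊆ closure A)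
    (hAne : A.Nonempty) (hBdd : BddBelow B) : sInf A = sInf B := by
  refine le_antisymm ?_ (csInf_le_csInf hBdd hAne hAB)
  refine le_csInf (hAne.mono hAB) (fun b hb => ?_)
  refine le_of_forall_pos_le_add (fun ε hε => ?_)
  obtain ⟨x, hxA, hxd⟩ := Metric.mem_closure_iff.mp (hBA hb) ε hε
  have h1 : sInf A ≤ x := csInf_le (hBdd.mono hAB) hxA
  have h2 : x - b < ε := by
    have := le_abs_self (x - b); rw [Real.dist_eq, abs_sub_comm] at hxd; linarith
  linarith

lemma matCost_cont_mat (p : ℝ) (a : Fin n → ℝ) (b : Fin m → ℝ) :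
    Continuous (fun M : Fin n → Fin m → ℝ => matCost p a b M) := by
  unfold matCost
  refine continuous_finset_sum _ fun j _ => continuous_finset_sum _ fun k _ => ?_
  exact (continuous_apply_apply j k).mul continuous_const

lemma matCost_cont_inner (p : ℝ) (hp : 1 ≤ p) {d : ℕ} (y : Fin n → Euc d) (z : Fin m → Euc d)
    (M : Fin n → Fin m → ℝ) :
    Continuous (fun θ : Euc d => matCost p (fun j => (inner ℝ θ (y j) : ℝ))
      (fun k => (inner ℝ θ (z k) : ℝ)) M) := by
  unfold matCost
  refine continuous_finset_sum _ fun j _ => continuous_finset_sum _ fun k _ => ?_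
  refine continuous_const.mul ?_
  have h1 : Continuous fun θ : Euc d => (inner ℝ θ (y j) : ℝ) - (inner ℝ θ (z k) : ℝ) :=
    (continuous_id.inner continuous_const).sub (continuous_id.inner continuous_const)
  exact h1.abs.rpow_const fun θ => Or.inr (by positivity)

lemma gFun_measurable (p : ℝ) (hp : 1 ≤ p) (hn : 0 < n) (hm : 0 < m) {d : ℕ}
    (y : Fin n → Euc d) (z : Fin m → Euc d) :
    Measurable (fun θ : Euc d =>
      gFun p (fun j => (inner ℝ θ (y j) : ℝ)) (fun k => (inner ℝ θ (z k) : ℝ))) := by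
  haveI : Nonempty ↥(matPoly n m) := (matPoly_nonempty hn hm).to_subtype
  obtain ⟨s, hsc, hsd⟩ := TopologicalSpace.exists_countable_dense ↥(matPoly n m)
  have hP₀sub : (Subtype.val '' s) ⊆ matPoly n m := by rintro x ⟨x', _, rfl⟩; exact x'.2
  have hP₀ne : (Subtype.val '' s).Nonempty := hsd.nonempty.image _
  have hclos : matPoly n m ⊆ closure (Subtype.val '' s) := by
    intro x hx
    have h1 : (⟨x, hx⟩ : ↥(matPoly n m)) ∈ closure s := hsd _
    exact image_closure_subset_closure_image continuous_subtype_val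
      (Set.mem_image_of_mem _ h1)
  obtain ⟨u, hu⟩ := (hsc.image _).exists_eq_range hP₀ne
  have key : ∀ θ : Euc d, gFun p (fun j => (inner ℝ θ (y j) : ℝ)) (fun k => (inner ℝ θ (z k) : ℝ))
      = ⨅ i : ℕ, matCost p (fun j => (inner ℝ θ (y j) : ℝ)) (fun k => (inner ℝ θ (z k) : ℝ)) (u i) := by
    intro θ
    set aθ : Fin n → ℝ := fun j => (inner ℝ θ (y j) : ℝ) with haθ
    set bθ : Fin m → ℝ := fun k => (inner ℝ θ (z k) : ℝ) with hbθ
    have h1 : sInf (matCost p aθ bθ '' (Subtype.val '' s))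
        = sInf (matCost p aθ bθ '' matPoly n m) := by
      refine csInf_eq_of_dense_sub (Set.image_mono hP₀sub) ?_ (hP₀ne.image _)
        (matCost_bddBelow p aθ bθ)
      rintro x ⟨M, hM, rfl⟩
      exact image_closure_subset_closure_image (matCost_cont_mat p aθ bθ)
        (Set.mem_image_of_mem _ (hclos hM))
    rw [gFun, ← h1, hu, ← Set.range_comp]
    exact congrArg sInf rfl
  simp only [funext key]
  exact Measurable.iInf fun i => (matCost_cont_inner p hp y z (u i)).measurable

end SWaux

namespace SWaux

lemma projMeasure_empMeas {d : ℕ} (θ : Euc d) (v : Fin n → Euc d) :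
    projMeasure θ (empMeas v) = empMeas (fun i => (inner ℝ θ (v i) : ℝ)) := by
  have hmeas : Measurable fun x : Euc d => (inner ℝ θ x : ℝ) :=
    (continuous_const.inner continuous_id).measurable
  rw [projMeasure, empMeas, empMeas, Measure.map_smul, map_finset_sum hmeas]
  congr 1
  refine Finset.sum_congr rfl fun i _ => ?_
  rw [Measure.map_dirac' hmeas]

lemma SWpPow_emp (p : ℝ) (hp : 1 ≤ p) (hn : 0 < n) (hm : 0 < m) {d : ℕ}
    (σ : Measure (Euc d)) (y : Fin n → Euc d) (z : Fin m → Euc d) :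
    SWpPow p σ (empMeas y) (empMeas z)
      = ∫ θ, gFun p (fun j => (inner ℝ θ (y j) : ℝ)) (fun k => (inner ℝ θ (z k) : ℝ)) ∂σ := by
  rw [SWpPow]
  refine integral_congr_ae (Filter.Eventually.of_forall fun θ => ?_)
  show WpPow p (projMeasure θ (empMeas y)) (projMeasure θ (empMeas z)) = _
  rw [projMeasure_empMeas, projMeasure_empMeas, WpPow_emp_eq p hp hn hm]

end SWaux


end AuxSW

open SWaux in
/-- **Single-sample bounded-difference property of the empirical sliced Wasserstein
distance** (key step in the proof of Lemma 15): replacing one sample point (staying in the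
ball of radius `D`) changes `SW_p^p(μ̂_n, ν̂_m)` by at most `(2D)^p/n` (resp. `(2D)^p/m`). -/
theorem sw_empirical_bounded_difference
    {d n m : ℕ} (hd : 1 ≤ d) (hn : 1 ≤ n) (hm : 1 ≤ m)
    {p D : ℝ} (hp : 1 ≤ p) (hD : 0 < D)
    (σ : Measure (Euc d)) [IsProbabilityMeasure σ]
    (hσs : σ (Metric.sphere (0 : Euc d) 1) = 1)
    (hσr : ∀ Q : Euc d ≃ₗᵢ[ℝ] Euc d, σ.map ⇑Q = σ)
    (y : Fin n → Euc d) (z : Fin m → Euc d)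
    (hy : ∀ i, ‖y i‖ ≤ D) (hz : ∀ j, ‖z j‖ ≤ D) :
    (∀ (i : Fin n) (yi' : Euc d), ‖yi'‖ ≤ D →
      |SWpPow p σ (empMeas y) (empMeas z) -
          SWpPow p σ (empMeas (Function.update y i yi')) (empMeas z)| ≤
        (2 * D) ^ p / (n : ℝ)) ∧
    (∀ (j : Fin m) (zj' : Euc d), ‖zj'‖ ≤ D →
      |SWpPow p σ (empMeas y) (empMeas z) -
          SWpPow p σ (empMeas y) (empMeas (Function.update z j zj'))| ≤
        (2 * D) ^ p / (m : ℝ)) := by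
  have hp0 : (0:ℝ) ≤ p := by linarith
  have hD0 : (0:ℝ) ≤ D := hD.le
  -- a.e. every direction is on the sphere
  have hae : ∀ᵐ θ ∂σ, ‖θ‖ = 1 := by
    have hcompl : σ (Metric.sphere (0 : Euc d) 1)ᶜ = 0 := by
      rw [measure_compl Metric.isClosed_sphere.measurableSet (measure_ne_top _ _), hσs,
        measure_univ, tsub_self]
    filter_upwards [mem_ae_iff.mpr hcompl] with θ hθ
    simpa [mem_sphere_zero_iff_norm] using hθ
  -- bounds on projections
  have hinner : ∀ (θ : Euc d) (x : Euc d), ‖θ‖ = 1 → ‖x‖ ≤ D → |(inner ℝ θ x : ℝ)| ≤ D := by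
    intro θ x hθ hx
    calc |(inner ℝ θ x : ℝ)| ≤ ‖θ‖ * ‖x‖ := abs_real_inner_le_norm θ x
    _ = ‖x‖ := by rw [hθ, one_mul]
    _ ≤ D := hx
  -- integrability of the sliced cost for a bounded sample
  have hIntegrable : ∀ (Y : Fin n → Euc d) (Z : Fin m → Euc d),
      (∀ i, ‖Y i‖ ≤ D) → (∀ j, ‖Z j‖ ≤ D) →
      Integrable (fun θ : Euc d =>
        gFun p (fun j => (inner ℝ θ (Y j) : ℝ)) (fun k => (inner ℝ θ (Z k) : ℝ))) σ := by
    intro Y Z hY hZ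
    refine Integrable.mono' (integrable_const ((2 * D) ^ p))
      ((gFun_measurable p hp hn hm Y Z).aestronglyMeasurable) ?_
    filter_upwards [hae] with θ hθ
    rw [Real.norm_eq_abs, abs_of_nonneg (gFun_nonneg p hn hm _ _)]
    exact gFun_le hp0 hD0 hn hm (fun j => hinner θ (Y j) hθ (hY j))
      (fun k => hinner θ (Z k) hθ (hZ k))
  constructor
  · intro i yi' hyi'
    set y' := Function.update y i yi' with hy'def
    have hy' : ∀ j, ‖y' j‖ ≤ D := by
      intro j
      by_cases h : j = i
      · subst h; simpa [hy'def] using hyi'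
      · simpa [hy'def, Function.update_of_ne h] using hy j
    rw [SWpPow_emp p hp hn hm σ y z, SWpPow_emp p hp hn hm σ y' z,
      ← integral_sub (hIntegrable y z hy hz) (hIntegrable y' z hy' hz)]
    have := norm_integral_le_of_norm_le (μ := σ)
      (f := fun θ => gFun p (fun j => (inner ℝ θ (y j) : ℝ)) (fun k => (inner ℝ θ (z k) : ℝ))
        - gFun p (fun j => (inner ℝ θ (y' j) : ℝ)) (fun k => (inner ℝ θ (z k) : ℝ)))
      (integrable_const ((2 * D) ^ p / n)) ?_
    · rwa [integral_const, probReal_univ, one_smul, Real.norm_eq_abs] at this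
    · filter_upwards [hae] with θ hθ
      rw [Real.norm_eq_abs]
      have hupd : (fun j => (inner ℝ θ (y' j) : ℝ))
          = Function.update (fun j => (inner ℝ θ (y j) : ℝ)) i (inner ℝ θ yi' : ℝ) := by
        funext j
        by_cases h : j = i
        · subst h; simp [hy'def]
        · simp [hy'def, Function.update_of_ne h]
      rw [hupd]
      refine gFun_diff_le hn hm fun M hM => ?_
      exact matCost_update_left hp0 hD0 hn (fun j => hinner θ (y j) hθ (hy j))
        (fun k => hinner θ (z k) hθ (hz k)) i (hinner θ yi' hθ hyi') hM
  · intro k0 zk' hzk'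
    set z' := Function.update z k0 zk' with hz'def
    have hz' : ∀ k, ‖z' k‖ ≤ D := by
      intro k
      by_cases h : k = k0
      · subst h; simpa [hz'def] using hzk'
      · simpa [hz'def, Function.update_of_ne h] using hz k
    rw [SWpPow_emp p hp hn hm σ y z, SWpPow_emp p hp hn hm σ y z',
      ← integral_sub (hIntegrable y z hy hz) (hIntegrable y z' hy hz')]
    have := norm_integral_le_of_norm_le (μ := σ)
      (f := fun θ => gFun p (fun j => (inner ℝ θ (y j) : ℝ)) (fun k => (inner ℝ θ (z k) : ℝ))
        - gFun p (fun j => (inner ℝ θ (y j) : ℝ)) (fun k => (inner ℝ θ (z' k) : ℝ)))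
      (integrable_const ((2 * D) ^ p / m)) ?_
    · rwa [integral_const, probReal_univ, one_smul, Real.norm_eq_abs] at this
    · filter_upwards [hae] with θ hθ
      rw [Real.norm_eq_abs]
      have hupd : (fun k => (inner ℝ θ (z' k) : ℝ))
          = Function.update (fun k => (inner ℝ θ (z k) : ℝ)) k0 (inner ℝ θ zk' : ℝ) := by
        funext k
        by_cases h : k = k0
        · subst h; simp [hz'def]
        · simp [hz'def, Function.update_of_ne h]
      rw [hupd]
      refine gFun_diff_le hn hm fun M hM => ?_
      exact matCost_update_right hp0 hD0 hm (fun j => hinner θ (y j) hθ (hy j))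
        (fun k => hinner θ (z k) hθ (hz k)) k0 (hinner θ zk' hθ hzk') hM
end
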